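/- arXiv:2404.18698 — 5 statements merged into one kernel-verified Lean document; each statement's English description precedes it below -/
import Mathlib

section
/- Let R be a ring, σ an automorphism of R, and δ a σ-derivation of R. Let S = R[x; σ, δ] be the skew polynomial ring and M a right R-module. A polynomial m = m₀ + m₁x + ⋯ + m_k x^k ∈ M ⊗_R S with m_k ≠ 0 is good if and only if for every r ∈ R, m_k σ^k(r) = 0 implies m r = 0. -/
open MulOpposite

/-- `δ` is a `σ`-derivation of the ring `R`. -/
def IsSigmaDeriv {R : Type} [Ring R] (σ : R ≃+* R) (δ : R → R) : Prop :=
  (∀ a b, δ (a + b) = δ a + δ b) ∧ ∀ a b, δ (a * b) = σ a * δ b + δ a * b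

/-- A presentation of the skew polynomial ring `S = R[x; σ, δ]`: `S` is a ring containing an
image of `R` via `ι`, with an element `x` satisfying `x·r = σ(r)·x + δ(r)`, and `S` is free
as a left `R`-module with basis the powers of `x`. -/
structure SkewPoly (R S : Type) [Ring R] [Ring S] (σ : R ≃+* R) (δ : R → R) : Type where
  ι : R →+* S
  x : S
  comm : ∀ r : R, x * ι r = ι (σ r) * x + ι (δ r)
  basis : Function.Bijective fun c : ℕ →₀ R => c.sum fun i a => ι a * x ^ i

/-- A presentation of the induced right `S`-module `M ⊗_R S` of a right `R`-module `M`
(right modules are encoded as modules over the opposite ring): `N` is a right `S`-module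
containing `M` via `j`, compatibly with the right `R`-actions, and every element of `N` is
uniquely a polynomial `∑ (j mᵢ)·xⁱ` with coefficients in `M`. -/
structure Induced (R S M N : Type) [Ring R] [Ring S] [AddCommGroup M] [Module Rᵐᵒᵖ M]
    [AddCommGroup N] [Module Sᵐᵒᵖ N] {σ : R ≃+* R} {δ : R → R}
    (sp : SkewPoly R S σ δ) : Type where
  j : M →+ N
  j_smul : ∀ (r : R) (m : M), j (op r • m) = op (sp.ι r) • j m
  free : Function.Bijective fun c : ℕ →₀ M => c.sum fun i m => op (sp.x ^ i) • j m

variable {R S M N : Type} [Ring R] [Ring S] [AddCommGroup M] [Module Rᵐᵒᵖ M]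
  [AddCommGroup N] [Module Sᵐᵒᵖ N] {σ : R ≃+* R} {δ : R → R}

/-- The polynomial `∑ (j mᵢ)·xⁱ` in `M ⊗_R S` with coefficient family `c`. -/
def pol (sp : SkewPoly R S σ δ) (im : Induced R S M N sp) (c : ℕ →₀ M) : N :=
  c.sum fun i m => op (sp.x ^ i) • im.j m

/-- `ν ∈ M ⊗_R S` has degree exactly `k`. -/
def DegEq (sp : SkewPoly R S σ δ) (im : Induced R S M N sp) (ν : N) (k : ℕ) : Prop :=
  ∃ c : ℕ →₀ M, pol sp im c = ν ∧ c k ≠ 0 ∧ ∀ i, k < i → c i = 0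

/-- `ν` is a good polynomial of degree `k`: whenever `ν·r ≠ 0` for `r ∈ R`,
`deg (ν·r) = deg ν = k`. -/
def GoodAt (sp : SkewPoly R S σ δ) (im : Induced R S M N sp) (ν : N) (k : ℕ) : Prop :=
  DegEq sp im ν k ∧ ∀ r : R, op (sp.ι r) • ν ≠ 0 → DegEq sp im (op (sp.ι r) • ν) k

/-- `ν` is a good polynomial. -/
def Good (sp : SkewPoly R S σ δ) (im : Induced R S M N sp) (ν : N) : Prop :=
  ∃ k, GoodAt sp im ν k


lemma pol_zero (sp : SkewPoly R S σ δ) (im : Induced R S M N sp) :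
    pol sp im 0 = 0 := Finsupp.sum_zero_index

lemma pol_add (sp : SkewPoly R S σ δ) (im : Induced R S M N sp) (c c' : ℕ →₀ M) :
    pol sp im (c + c') = pol sp im c + pol sp im c' :=
  Finsupp.sum_add_index' (fun i => by simp) (fun i m m' => by simp [smul_add])

/-- `pol` as an additive monoid hom. -/
def polHom (sp : SkewPoly R S σ δ) (im : Induced R S M N sp) : (ℕ →₀ M) →+ N where
  toFun := pol sp im
  map_zero' := pol_zero sp im
  map_add' := pol_add sp im

lemma pol_inj (sp : SkewPoly R S σ δ) (im : Induced R S M N sp) {c c' : ℕ →₀ M}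
    (h : pol sp im c = pol sp im c') : c = c' := im.free.1 h

lemma keyL (sp : SkewPoly R S σ δ) (im : Induced R S M N sp) (i : ℕ) :
    ∀ (r : R) (m : M), ∃ d : ℕ →₀ M,
      op (sp.ι r) • (op (sp.x ^ i) • im.j m) = pol sp im d ∧
      d i = op ((⇑σ)^[i] r) • m ∧ ∀ t, i < t → d t = 0 := by
  induction i with
  | zero =>
    intro r m
    refine ⟨Finsupp.single 0 (op r • m), ?_, by simp, fun t ht => ?_⟩
    · rw [pol, Finsupp.sum_single_index (by simp)]
      simp [← im.j_smul]
    · rw [Finsupp.single_apply_eq_zero]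
      omega
  | succ i ih =>
    intro r m
    obtain ⟨d₁, hd₁, hd₁i, hd₁t⟩ := ih (σ r) m
    obtain ⟨d₂, hd₂, _, hd₂t⟩ := ih (δ r) m
    refine ⟨d₁.mapDomain Nat.succ + d₂, ?_, ?_, ?_⟩
    · rw [← mul_smul, ← op_mul, pow_succ, mul_assoc, sp.comm r, mul_add, ← mul_assoc]
      simp only [op_add, op_mul, add_smul, mul_smul]
      rw [hd₁, hd₂, pol_add]
      congr 1
      rw [pol, pol, Finsupp.sum_mapDomain_index (by simp) (fun a b₁ b₂ => by simp [smul_add]),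
        Finsupp.smul_sum]
      refine Finset.sum_congr rfl fun t _ => ?_
      show op sp.x • op (sp.x ^ t) • im.j (d₁ t) = op (sp.x ^ t.succ) • im.j (d₁ t)
      rw [← mul_smul, ← op_mul, pow_succ]
    · rw [Finsupp.add_apply, hd₂t (i + 1) (by omega),
        show i + 1 = Nat.succ i from rfl,
        Finsupp.mapDomain_apply Nat.succ_injective, hd₁i, add_zero,
        Function.iterate_succ_apply]
    · intro t ht
      rw [Finsupp.add_apply, hd₂t t (by omega)]
      cases t with
      | zero => omega
      | succ s =>
        rw [show s + 1 = Nat.succ s from rfl, Finsupp.mapDomain_apply Nat.succ_injective,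
          hd₁t s (by omega), zero_add]

lemma keyC (sp : SkewPoly R S σ δ) (im : Induced R S M N sp) (c : ℕ →₀ M) (k : ℕ)
    (htop : ∀ i, k < i → c i = 0) (r : R) :
    ∃ d : ℕ →₀ M, op (sp.ι r) • pol sp im c = pol sp im d ∧
      d k = op ((⇑σ)^[k] r) • c k ∧ ∀ t, k < t → d t = 0 := by
  choose D hD hDk hDt using keyL sp im
  refine ⟨∑ i ∈ c.support, D i r (c i), ?_, ?_, ?_⟩
  · rw [pol, Finsupp.sum, Finset.smul_sum, show pol sp im (∑ i ∈ c.support, D i r (c i))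
      = polHom sp im (∑ i ∈ c.support, D i r (c i)) from rfl, map_sum]
    exact Finset.sum_congr rfl fun i _ => hD i r (c i)
  · rw [Finset.sum_apply']
    by_cases hkc : k ∈ c.support
    · rw [Finset.sum_eq_single_of_mem k hkc, hDk]
      intro i hi hik
      rcases lt_or_gt_of_ne hik with h | h
      · exact hDt i r (c i) k h
      · exact absurd (htop i h) (Finsupp.mem_support_iff.1 hi)
    · rw [Finsupp.notMem_support_iff.1 hkc, smul_zero]
      refine Finset.sum_eq_zero fun i hi => ?_
      have hik : i < k := by
        rcases lt_trichotomy i k with h | h | h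
        · exact h
        · exact absurd (h ▸ hkc) (fun h' => h' hi)
        · exact absurd (htop i h) (Finsupp.mem_support_iff.1 hi)
      exact hDt i r (c i) k hik
  · intro t ht
    rw [Finset.sum_apply']
    refine Finset.sum_eq_zero fun i hi => ?_
    have : i ≤ k := by
      by_contra h
      exact (Finsupp.mem_support_iff.1 hi) (htop i (by omega))
    exact hDt i r (c i) t (by omega)

/-- a polynomial `m` of degree `k` with leading coefficient `m_k ≠ 0` is good
if and only if for every `r ∈ R`, `m_k·σᵏ(r) = 0` implies `m·r = 0`. -/
theorem stmt3 (sp : SkewPoly R S σ δ) (im : Induced R S M N sp) (hδ : IsSigmaDeriv σ δ)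
    (ν : N) (k : ℕ) (c : ℕ →₀ M) (hc : pol sp im c = ν) (hk : c k ≠ 0)
    (htop : ∀ i, k < i → c i = 0) :
    GoodAt sp im ν k ↔ ∀ r : R, op ((⇑σ)^[k] r) • c k = 0 → op (sp.ι r) • ν = 0 := by
  constructor
  · rintro ⟨_, hgood⟩ r hr
    by_contra hne
    obtain ⟨d, hd, hdk, hdt⟩ := keyC sp im c k htop r
    obtain ⟨e, he, hek, het⟩ := hgood r hne
    rw [← hc, hd] at he
    have := pol_inj sp im he
    exact hek (this ▸ (hdk.trans hr))
  · intro h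
    refine ⟨⟨c, hc, hk, htop⟩, fun r hr => ?_⟩
    obtain ⟨d, hd, hdk, hdt⟩ := keyC sp im c k htop r
    rw [hc] at hd
    refine ⟨d, hd.symm, fun hdk0 => hr ?_, hdt⟩
    exact h r (hdk ▸ hdk0)
end

section
/- Let R be a ring, σ an automorphism of R, δ a σ-derivation, S = R[x; σ, δ], and M a right R-module. If a submodule N of M is essential in M, and the induced module N ⊗_R S is essential in M ⊗_R S as right S-modules, then N ⊗_R S is essential in M ⊗_R S as right R-modules, and conversely: if N ⊗_R S is essential in M ⊗_R S as right R-modules, then it is essential as right S-modules. -/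
open MulOpposite

variable {R S M N : Type} [Ring R] [Ring S] [AddCommGroup M] [Module Rᵐᵒᵖ M]
  [AddCommGroup N] [Module Sᵐᵒᵖ N] {σ : R ≃+* R} {δ : R → R}

/-- The subset of `M ⊗_R S` of polynomials all of whose coefficients lie in the
submodule `P` of `M`, i.e. the induced submodule `P ⊗_R S`. -/
def indSub (sp : SkewPoly R S σ δ) (im : Induced R S M N sp) (P : Submodule Rᵐᵒᵖ M) :
    Set N :=
  {ν : N | ∃ c : ℕ →₀ M, (∀ i, c i ∈ P) ∧ pol sp im c = ν}

namespace Stmt8Proof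

variable (sp : SkewPoly R S σ δ) (im : Induced R S M N sp)

theorem pol_def (c : ℕ →₀ M) :
    pol sp im c = c.sum fun i m => op (sp.x ^ i) • im.j m := rfl

theorem pol_zero : pol sp im 0 = 0 := Finsupp.sum_zero_index

theorem pol_add (c₁ c₂ : ℕ →₀ M) :
    pol sp im (c₁ + c₂) = pol sp im c₁ + pol sp im c₂ :=
  Finsupp.sum_add_index' (fun i => by rw [map_zero, smul_zero])
    (fun i m₁ m₂ => by rw [map_add, smul_add])

def polHom : (ℕ →₀ M) →+ N where
  toFun := pol sp im
  map_zero' := pol_zero sp im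
  map_add' := pol_add sp im

@[simp] theorem polHom_apply (c : ℕ →₀ M) : polHom sp im c = pol sp im c := rfl

theorem pol_single (i : ℕ) (m : M) :
    pol sp im (Finsupp.single i m) = op (sp.x ^ i) • im.j m :=
  Finsupp.sum_single_index (by rw [map_zero, smul_zero])

theorem pol_inj : Function.Injective (pol sp im) := im.free.1

theorem pol_surj : Function.Surjective (pol sp im) := im.free.2

theorem mem_indSub (P : Submodule Rᵐᵒᵖ M) (c : ℕ →₀ M) (h : ∀ i, c i ∈ P) :
    pol sp im c ∈ indSub sp im P := ⟨c, h, rfl⟩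

theorem coeff_mem (P : Submodule Rᵐᵒᵖ M) (c : ℕ →₀ M)
    (h : pol sp im c ∈ indSub sp im P) (i : ℕ) : c i ∈ P := by
  obtain ⟨c', hc', he⟩ := h
  have hcc : c' = c := pol_inj sp im he
  rw [← hcc]
  exact hc' i

theorem pol_shift (k : ℕ) (c : ℕ →₀ M) :
    op (sp.x ^ k) • pol sp im c = pol sp im (c.mapDomain (· + k)) := by
  rw [pol_def, pol_def, Finsupp.smul_sum,
    Finsupp.sum_mapDomain_index (fun i => by rw [map_zero, smul_zero])
      (fun i m₁ m₂ => by rw [map_add, smul_add])]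
  refine Finsupp.sum_congr fun i _ => ?_
  rw [smul_smul, ← op_mul, ← pow_add]

/-- The key commutation: multiplying `(j m)·xⁱ` on the right by `ι r` gives a polynomial
of degree at most `i` whose coefficients are right `R`-multiples of `m`. -/
theorem peel (m : M) : ∀ (i : ℕ) (r : R), ∃ c : ℕ →₀ M,
    op (sp.ι r) • (op (sp.x ^ i) • im.j m) = pol sp im c ∧
    (∀ l, ∃ s : R, c l = op s • m) ∧ (∀ l, i < l → c l = 0) := by
  intro i
  induction i with
  | zero =>
    intro r
    refine ⟨Finsupp.single 0 (op r • m), ?_, fun l => ?_, fun l hl => ?_⟩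
    · rw [pol_single, pow_zero, op_one, one_smul, one_smul]
      exact (im.j_smul r m).symm
    · rcases l with _ | l
      · exact ⟨r, by rw [Finsupp.single_eq_same]⟩
      · refine ⟨0, ?_⟩
        rw [Finsupp.single_eq_of_ne (by omega), op_zero, zero_smul]
    · rw [Finsupp.single_eq_of_ne (by omega)]
  | succ i ih =>
    intro r
    obtain ⟨c₁, h₁, h₁s, h₁b⟩ := ih (σ r)
    obtain ⟨c₂, h₂, h₂s, h₂b⟩ := ih (δ r)
    refine ⟨c₁.mapDomain (· + 1) + c₂, ?_, fun l => ?_, fun l hl => ?_⟩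
    · have hring : sp.x ^ (i + 1) * sp.ι r
          = sp.x ^ i * (sp.ι (σ r) * sp.x) + sp.x ^ i * sp.ι (δ r) := by
        rw [pow_succ, mul_assoc, sp.comm r, mul_add]
      have e1 : op (sp.ι r) • (op (sp.x ^ (i + 1)) • im.j m)
          = op (sp.x ^ (i + 1) * sp.ι r) • im.j m := by
        rw [smul_smul, ← op_mul]
      have r1 : op sp.x • (op (sp.ι (σ r)) • (op (sp.x ^ i) • im.j m))
          = op (sp.x ^ i * (sp.ι (σ r) * sp.x)) • im.j m := by
        rw [smul_smul, smul_smul, ← op_mul, ← op_mul]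
      have r2 : op (sp.ι (δ r)) • (op (sp.x ^ i) • im.j m)
          = op (sp.x ^ i * sp.ι (δ r)) • im.j m := by
        rw [smul_smul, ← op_mul]
      have e2 : op (sp.ι r) • (op (sp.x ^ (i + 1)) • im.j m)
          = op sp.x • (op (sp.ι (σ r)) • (op (sp.x ^ i) • im.j m))
            + op (sp.ι (δ r)) • (op (sp.x ^ i) • im.j m) := by
        rw [e1, r1, r2, ← add_smul, ← op_add, hring]
      rw [e2, h₁, h₂, ← pow_one sp.x, pol_shift, ← pol_add]
    · rw [Finsupp.add_apply]
      rcases l with _ | l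
      · obtain ⟨s₂, hs₂⟩ := h₂s 0
        refine ⟨s₂, ?_⟩
        rw [Finsupp.mapDomain_notin_range _ _ (by rintro ⟨a, ha⟩; exact Nat.succ_ne_zero a ha), zero_add, hs₂]
      · obtain ⟨s₁, hs₁⟩ := h₁s l
        obtain ⟨s₂, hs₂⟩ := h₂s (l + 1)
        refine ⟨s₁ + s₂, ?_⟩
        rw [Finsupp.mapDomain_apply (add_left_injective 1) c₁ l, hs₁, hs₂, op_add, add_smul]
    · rw [Finsupp.add_apply]
      rcases l with _ | l
      · omega
      · rw [Finsupp.mapDomain_apply (add_left_injective 1) c₁ l, h₁b l (by omega),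
          h₂b (l + 1) (by omega), add_zero]

/-- Right multiplication by `ι r` : the image has a representation whose coefficients
at indices satisfying an upward-closed predicate `Q` stay in `P`, provided the original
ones did. -/
theorem smul_rep (P : Submodule Rᵐᵒᵖ M) (c : ℕ →₀ M) (r : R) (Q : ℕ → Prop)
    (hup : ∀ {j j'}, Q j → j ≤ j' → Q j') (hc : ∀ i, Q i → c i ∈ P) :
    ∃ c' : ℕ →₀ M, op (sp.ι r) • pol sp im c = pol sp im c' ∧ ∀ j, Q j → c' j ∈ P := by
  classical
  have h := fun i : ℕ => peel sp im (c i) i r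
  choose d hd hds hdb using h
  refine ⟨∑ i ∈ c.support, d i, ?_, ?_⟩
  · have h1 : op (sp.ι r) • pol sp im c
        = ∑ i ∈ c.support, op (sp.ι r) • (op (sp.x ^ i) • im.j (c i)) := by
      rw [pol_def, Finsupp.smul_sum, Finsupp.sum]
    rw [h1, Finset.sum_congr rfl fun i _ => hd i]
    exact (map_sum (polHom sp im) _ _).symm
  · intro j hQ
    rw [Finset.sum_apply']
    refine Submodule.sum_mem P fun i _ => ?_
    by_cases hij : i < j
    · rw [hdb i j hij]; exact P.zero_mem
    · obtain ⟨s, hs⟩ := hds i j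
      rw [hs]
      exact P.smul_mem _ (hc i (hup hQ (Nat.le_of_not_lt hij)))

/-- Any right `S`-multiple of `ν` is a staggered sum of right `R`-multiples of `ν`. -/
theorem op_smul_decomp (f : S) (ν : N) : ∃ a : ℕ →₀ R,
    op f • ν = ∑ i ∈ a.support, op (sp.x ^ i) • (op (sp.ι (a i)) • ν) := by
  obtain ⟨a, ha⟩ := sp.basis.2 f
  refine ⟨a, ?_⟩
  have h1 : f = ∑ i ∈ a.support, sp.ι (a i) * sp.x ^ i := by
    rw [← ha]; rfl
  have h2 : op f = ∑ i ∈ a.support, op (sp.ι (a i) * sp.x ^ i) := by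
    rw [h1]
    exact map_sum (opAddEquiv : S ≃+ Sᵐᵒᵖ) _ _
  rw [h2, Finset.sum_smul]
  refine Finset.sum_congr rfl fun i _ => ?_
  rw [op_mul, mul_smul]

/-- The main induction: if `op f • ν ∈ P⊗S \ 0` for some `f ∈ S` (for every nonzero element),
then already some `op (ι r) • ν ∈ P⊗S \ 0`.  The induction is on a bound `n` for the
indices where coefficients of `ν` lie outside `P`. -/
theorem main (P : Submodule Rᵐᵒᵖ M)
    (hS : ∀ ν : N, ν ≠ 0 → ∃ f : S, op f • ν ∈ indSub sp im P ∧ op f • ν ≠ 0) :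
    ∀ (n : ℕ) (c : ℕ →₀ M), pol sp im c ≠ 0 → (∀ j, n < j → c j ∈ P) →
      ∃ r : R, op (sp.ι r) • pol sp im c ∈ indSub sp im P ∧
        op (sp.ι r) • pol sp im c ≠ 0 := by
  intro n
  induction n using Nat.strong_induction_on with
  | _ n IH =>
    intro c hc0 hhigh
    by_cases hcn : c n ∈ P
    · rcases n with _ | m
      · refine ⟨1, ?_, ?_⟩
        · rw [map_one, op_one, one_smul]
          refine mem_indSub sp im P c fun i => ?_
          rcases i with _ | i
          · exact hcn
          · exact hhigh _ (Nat.succ_pos i)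
        · rw [map_one, op_one, one_smul]; exact hc0
      · refine IH m (Nat.lt_succ_self m) c hc0 fun j hj => ?_
        by_cases hj2 : m + 1 < j
        · exact hhigh j hj2
        · have : j = m + 1 := by omega
          rw [this]; exact hcn
    · by_cases hEx : ∃ r : R, op (sp.ι r) • pol sp im c ≠ 0 ∧
          (op (sp.ι r) • pol sp im c ∈ indSub sp im P ∨
            ∃ m, n = m + 1 ∧ ∃ c'' : ℕ →₀ M,
              pol sp im c'' = op (sp.ι r) • pol sp im c ∧ ∀ j, m < j → c'' j ∈ P)
      · obtain ⟨r, hr0, hr⟩ := hEx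
        rcases hr with h | ⟨m, hnm, c'', hceq, chigh⟩
        · exact ⟨r, h, hr0⟩
        · obtain ⟨r', h1, h2⟩ := IH m (by omega) c'' (by rw [hceq]; exact hr0) chigh
          have hcomp : op (sp.ι (r * r')) • pol sp im c = op (sp.ι r') • pol sp im c'' := by
            rw [map_mul, op_mul, mul_smul, ← hceq]
          exact ⟨r * r', by rw [hcomp]; exact h1, by rw [hcomp]; exact h2⟩
      · exfalso
        push_neg at hEx
        obtain ⟨f, hfmem, hf0⟩ := hS (pol sp im c) hc0
        obtain ⟨a, haeq⟩ := op_smul_decomp sp f (pol sp im c)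
        classical
        have hrep : ∀ i : ℕ, ∃ d : ℕ →₀ M,
            op (sp.ι (a i)) • pol sp im c ≠ 0 →
            (pol sp im d = op (sp.ι (a i)) • pol sp im c ∧
              (∀ j, n < j → d j ∈ P) ∧ d n ∉ P) := by
          intro i
          by_cases hui : op (sp.ι (a i)) • pol sp im c ≠ 0
          · obtain ⟨d, hd1, hd2⟩ := smul_rep sp im P c (a i) (fun j => n < j)
              (fun hj hle => lt_of_lt_of_le hj hle) hhigh
            refine ⟨d, fun _ => ⟨hd1.symm, hd2, fun hdn => ?_⟩⟩
            obtain ⟨hnmem, hndrop⟩ := hEx (a i) hui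
            rcases Nat.eq_zero_or_pos n with h0 | hpos
            · apply hnmem
              rw [hd1]
              refine mem_indSub sp im P d fun j => ?_
              by_cases hj : n < j
              · exact hd2 j hj
              · have : j = n := by omega
                rw [this]; exact hdn
            · obtain ⟨j, hj1, hj2⟩ := hndrop (n - 1) (by omega) d hd1.symm
              apply hj2
              by_cases hjn : n < j
              · exact hd2 j hjn
              · have : j = n := by omega
                rw [this]; exact hdn
          · exact ⟨0, fun h => absurd h hui⟩
        choose d hd using hrep
        set J := a.support.filter (fun i => op (sp.ι (a i)) • pol sp im c ≠ 0) with hJdef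
        have hJne : J.Nonempty := by
          rw [Finset.nonempty_iff_ne_empty]
          intro hemp
          apply hf0
          rw [haeq]
          refine Finset.sum_eq_zero fun i hi => ?_
          by_cases hz : op (sp.ι (a i)) • pol sp im c ≠ 0
          · have hiJ : i ∈ J := Finset.mem_filter.mpr ⟨hi, hz⟩
            rw [hemp] at hiJ
            exact absurd hiJ (Finset.notMem_empty i)
          · push_neg at hz
            rw [hz, smul_zero]
        set i₀ := J.max' hJne with hi₀def
        have hi₀J : i₀ ∈ J := J.max'_mem hJne
        have hu₀ : op (sp.ι (a i₀)) • pol sp im c ≠ 0 := (Finset.mem_filter.mp hi₀J).2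
        have hw : op f • pol sp im c = pol sp im (∑ i ∈ J, (d i).mapDomain (· + i)) := by
          rw [haeq]
          have hstep1 : ∑ i ∈ a.support, op (sp.x ^ i) • (op (sp.ι (a i)) • pol sp im c)
              = ∑ i ∈ J, op (sp.x ^ i) • (op (sp.ι (a i)) • pol sp im c) := by
            refine (Finset.sum_subset (Finset.filter_subset _ _) fun i hi hni => ?_).symm
            have hz : ¬op (sp.ι (a i)) • pol sp im c ≠ 0 :=
              fun hz => hni (Finset.mem_filter.mpr ⟨hi, hz⟩)
            push_neg at hz
            rw [hz, smul_zero]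
          have hstep2 : ∀ i ∈ J, op (sp.x ^ i) • (op (sp.ι (a i)) • pol sp im c)
              = pol sp im ((d i).mapDomain (· + i)) := by
            intro i hi
            have hui := (Finset.mem_filter.mp hi).2
            rw [← (hd i hui).1, pol_shift]
          rw [hstep1, Finset.sum_congr rfl hstep2]
          exact (map_sum (polHom sp im) _ J).symm
        have hCmem : ∀ j, (∑ i ∈ J, (d i).mapDomain (· + i)) j ∈ P := by
          refine coeff_mem sp im P _ ?_ 
          rw [← hw]; exact hfmem
        have hslot := hCmem (n + i₀)
        rw [Finset.sum_apply', ← Finset.add_sum_erase _ _ hi₀J] at hslot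
        have htop : ((d i₀).mapDomain (· + i₀)) (n + i₀) = d i₀ n :=
          Finsupp.mapDomain_apply (add_left_injective i₀) _ n
        rw [htop] at hslot
        have hrest : ∑ i ∈ J.erase i₀, ((d i).mapDomain (· + i)) (n + i₀) ∈ P := by
          refine Submodule.sum_mem P fun i hi => ?_
          have hiJ := Finset.mem_of_mem_erase hi
          have hine := Finset.ne_of_mem_erase hi
          have hile : i ≤ i₀ := Finset.le_max' J i hiJ
          have hui := (Finset.mem_filter.mp hiJ).2
          have hidx : n + i₀ = (n + (i₀ - i)) + i := by omega
          rw [hidx, Finsupp.mapDomain_apply (add_left_injective i) _ _]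
          exact (hd i hui).2.1 _ (by omega)
        have hfin : d i₀ n ∈ P := by
          have hsub := P.sub_mem hslot hrest
          rwa [add_sub_cancel_right] at hsub
        exact (hd i₀ hu₀).2.2 hfin

end Stmt8Proof

/-- if `P` is an essential submodule of `M`, then the induced submodule
`P ⊗_R S` is essential in `M ⊗_R S` as right `S`-modules if and only if it is essential
as right `R`-modules. -/
theorem stmt8 (sp : SkewPoly R S σ δ) (im : Induced R S M N sp) (hδ : IsSigmaDeriv σ δ)
    (P : Submodule Rᵐᵒᵖ M)
    (hPess : ∀ m : M, m ≠ 0 → ∃ r : R, op r • m ∈ P ∧ op r • m ≠ 0) :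
    (∀ ν : N, ν ≠ 0 → ∃ f : S, op f • ν ∈ indSub sp im P ∧ op f • ν ≠ 0) ↔
      (∀ ν : N, ν ≠ 0 → ∃ r : R, op (sp.ι r) • ν ∈ indSub sp im P ∧ op (sp.ι r) • ν ≠ 0) := by
  constructor
  · intro hS ν hν
    obtain ⟨c, rfl⟩ := Stmt8Proof.pol_surj sp im ν
    refine Stmt8Proof.main sp im P hS (c.support.sup id) c hν fun j hj => ?_
    have hz : c j = 0 := by
      by_contra h
      have hmem : j ∈ c.support := Finsupp.mem_support_iff.mpr h
      have hle : j ≤ c.support.sup id := Finset.le_sup (f := id) hmem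
      omega
    rw [hz]
    exact P.zero_mem
  · intro hR ν hν
    obtain ⟨r, h1, h2⟩ := hR ν hν
    exact ⟨sp.ι r, h1, h2⟩
end

section
/- Let R be a ring, σ an automorphism of R, δ a σ-derivation, S = R[x; σ, δ], and M a right R-module. If M is nonsingular as an R-module, then the induced right S-module M ⊗_R S is nonsingular as an S-module. -/
open MulOpposite

variable {R S M N : Type} [Ring R] [Ring S] [AddCommGroup M] [Module Rᵐᵒᵖ M]
  [AddCommGroup N] [Module Sᵐᵒᵖ N] {σ : R ≃+* R} {δ : R → R}

/-- A subset `J` of a ring `T` (to be applied to right annihilators, which are right ideals)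
is essential as a right ideal: every nonzero `t ∈ T` has a nonzero right multiple in `J`. -/
def EssAnn {T : Type} [Ring T] (J : Set T) : Prop :=
  ∀ t : T, t ≠ 0 → ∃ s : T, t * s ≠ 0 ∧ t * s ∈ J

/-!
Let `ν ≠ 0` in `M ⊗_R S` have degree `d` and leading coefficient `m`; it suffices to show that
the annihilator of `m` is essential. Given `t ≠ 0` in `R`, essentiality of the annihilator of
`ν` yields `f ∈ S` with `0 ≠ σ⁻ᵈ(t)·f = ∑_{l ≤ e} σ⁻ᵈ(t) aₗ xˡ` (top coefficient nonzero) and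
`ν·σ⁻ᵈ(t)·f = 0`. Since `xⁱ·r = σⁱ(r)·xⁱ + (lower terms)`, the coefficient of `x^(d+e)` in that
product is `m·t·σᵈ(aₑ)`, so `m` is killed by the nonzero right multiple `t·σᵈ(aₑ)` of `t`.
-/

theorem Finsupp.exists_sum_eq_sum_range {A B : Type} [Zero A] [AddCommMonoid B] (c : ℕ →₀ A)
    (hc : c ≠ 0) (g : ℕ → A → B) (hg : ∀ i, g i 0 = 0) :
    ∃ d, c.sum g = ∑ i ∈ Finset.range (d + 1), g i (c i) ∧ c d ≠ 0 := by
  have hs : c.support.Nonempty := Finsupp.support_nonempty_iff.mpr hc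
  refine ⟨c.support.max' hs, c.sum_of_support_subset (fun i hi => ?_) g fun i _ => hg i,
    Finsupp.mem_support_iff.mp (c.support.max'_mem hs)⟩
  exact Finset.mem_range_succ_iff.mpr (c.support.le_max' i hi)

namespace SkewPoly

variable (sp : SkewPoly R S σ δ)

theorem ι_injective : Function.Injective sp.ι := by
  refine (injective_iff_map_eq_zero sp.ι).mpr fun r hr => ?_
  have : Finsupp.single 0 r = 0 := sp.basis.injective (by simp [Finsupp.sum_single_index, hr])
  exact Finsupp.single_eq_zero.mp this

theorem exists_ι_mul_eq_sum_range (r : R) (f : S) (h : sp.ι r * f ≠ 0) :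
    ∃ (e : ℕ) (a : ℕ → R), sp.ι r * f = ∑ l ∈ Finset.range (e + 1), sp.ι (r * a l) * sp.x ^ l ∧
      r * a e ≠ 0 := by
  obtain ⟨a, rfl⟩ := sp.basis.surjective f
  let b : ℕ →₀ R := a.mapRange (r * ·) (mul_zero r)
  have hb : sp.ι r * (a.sum fun l u => sp.ι u * sp.x ^ l) =
      b.sum fun l u => sp.ι u * sp.x ^ l := by
    rw [Finsupp.sum_mapRange_index fun l => by simp, Finsupp.mul_sum]
    simp only [map_mul, mul_assoc]
  have hb0 : b ≠ 0 := by
    rintro hb0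
    exact h (by rw [hb, hb0, Finsupp.sum_zero_index])
  obtain ⟨e, hsum, he⟩ :=
    b.exists_sum_eq_sum_range hb0 (fun l u => sp.ι u * sp.x ^ l) fun l => by simp
  exact ⟨e, a, hb.trans hsum, he⟩

end SkewPoly

namespace Induced

variable {sp : SkewPoly R S σ δ} (im : Induced R S M N sp)

/-- `ν` has degree at most `d`, and `m` (possibly zero) is its coefficient of `xᵈ`. -/
def TopCoeff (ν : N) (d : ℕ) (m : M) : Prop :=
  ∃ c : ℕ → M, ν = ∑ i ∈ Finset.range (d + 1), op (sp.x ^ i) • im.j (c i) ∧ c d = m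

variable {im} {ν : N} {d : ℕ} {m : M}

theorem topCoeff_j (m : M) : im.TopCoeff (im.j m) 0 m :=
  ⟨fun _ => m, by simp, rfl⟩

theorem TopCoeff.add {ν' : N} {m' : M} (h : im.TopCoeff ν d m) (h' : im.TopCoeff ν' d m') :
    im.TopCoeff (ν + ν') d (m + m') := by
  obtain ⟨c, rfl, rfl⟩ := h
  obtain ⟨c', rfl, rfl⟩ := h'
  exact ⟨c + c', by simp only [Pi.add_apply, map_add, smul_add, Finset.sum_add_distrib], rfl⟩

theorem TopCoeff.succ (h : im.TopCoeff ν d m) : im.TopCoeff ν (d + 1) 0 := by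
  obtain ⟨c, rfl, -⟩ := h
  refine ⟨Function.update c (d + 1) 0, ?_, Function.update_self ..⟩
  rw [Finset.sum_range_succ _ (d + 1), Function.update_self, map_zero, smul_zero, add_zero]
  refine Finset.sum_congr rfl fun i hi => ?_
  rw [Function.update_of_ne (by simp at hi; omega)]

theorem TopCoeff.of_lt {e : ℕ} (h : im.TopCoeff ν d m) (hde : d < e) : im.TopCoeff ν e 0 := by
  induction e, hde using Nat.le_induction with
  | base => exact h.succ
  | succ e _ ih => exact ih.succ

theorem TopCoeff.smul_x (h : im.TopCoeff ν d m) : im.TopCoeff (op sp.x • ν) (d + 1) m := by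
  obtain ⟨c, rfl, rfl⟩ := h
  refine ⟨fun | 0 => 0 | i + 1 => c i, ?_, rfl⟩
  simp only [Finset.sum_range_succ' _ (d + 1), Finset.smul_sum, pow_succ, op_mul, mul_smul,
    map_zero, smul_zero, add_zero]

theorem TopCoeff.smul_xpow (h : im.TopCoeff ν d m) (l : ℕ) :
    im.TopCoeff (op (sp.x ^ l) • ν) (d + l) m := by
  induction l with
  | zero => simpa using h
  | succ l ih => simpa only [pow_succ, op_mul, mul_smul, ← add_assoc] using ih.smul_x

theorem TopCoeff.eq_smul_x_add_j (h : im.TopCoeff ν (d + 1) m) :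
    ∃ ν' m₀, im.TopCoeff ν' d m ∧ ν = op sp.x • ν' + im.j m₀ := by
  obtain ⟨c, rfl, rfl⟩ := h
  refine ⟨_, c 0, ⟨fun i => c (i + 1), rfl, rfl⟩, ?_⟩
  simp only [Finset.sum_range_succ' _ (d + 1), Finset.smul_sum, pow_succ, op_mul, mul_smul,
    pow_zero, op_one, one_smul]

theorem TopCoeff.smul_ι (h : im.TopCoeff ν d m) (r : R) :
    im.TopCoeff (op (sp.ι r) • ν) d (op ((σ ^ d) r) • m) := by
  induction d generalizing ν m r with
  | zero =>
    obtain ⟨c, rfl, rfl⟩ := h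
    simpa [← im.j_smul] using topCoeff_j (op r • c 0)
  | succ d ih =>
    obtain ⟨ν', m₀, h', rfl⟩ := h.eq_smul_x_add_j
    have hx : op (sp.ι r) • op sp.x • ν' =
        op sp.x • op (sp.ι (σ r)) • ν' + op (sp.ι (δ r)) • ν' := by
      rw [smul_smul, smul_smul, ← op_mul, ← op_mul, sp.comm, op_add, add_smul]
    have := ((ih h' (σ r)).smul_x.add ((ih h' (δ r)).succ)).add
      ((topCoeff_j (op r • m₀)).of_lt d.succ_pos)
    rwa [add_zero, add_zero, ← hx, im.j_smul, ← smul_add] at this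

theorem TopCoeff.smul_sum (h : im.TopCoeff ν d m) (b : ℕ → R) (e : ℕ) :
    im.TopCoeff (op (∑ l ∈ Finset.range (e + 1), sp.ι (b l) * sp.x ^ l) • ν) (d + e)
      (op ((σ ^ d) (b e)) • m) := by
  have term (l : ℕ) :
      im.TopCoeff (op (sp.ι (b l) * sp.x ^ l) • ν) (d + l) (op ((σ ^ d) (b l)) • m) := by
    simpa only [op_mul, mul_smul] using (h.smul_ι (b l)).smul_xpow l
  induction e with
  | zero => simpa using term 0
  | succ e ih =>
    simpa only [Finset.sum_range_succ _ (e + 1), op_add, add_smul, zero_add, ← add_assoc] using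
      (ih.of_lt (d + e).lt_add_one).add (term (e + 1))

theorem TopCoeff.eq_zero_of_zero (h : im.TopCoeff 0 d m) : m = 0 := by
  obtain ⟨c, hc, rfl⟩ := h
  set C : ℕ →₀ M := ∑ i ∈ Finset.range (d + 1), Finsupp.single i (c i)
  have hC : C = 0 := im.free.injective <| by
    simp only [C, Finsupp.sum_zero_index]
    rw [← Finsupp.sum_finsetSum_index (fun _ => by simp) fun _ _ _ => by rw [map_add, smul_add]]
    simpa [Finsupp.sum_single_index] using hc.symm
  simpa [C, Finsupp.single_apply] using congr($hC d)

theorem exists_topCoeff_ne_zero (hν : ν ≠ 0) : ∃ d m, im.TopCoeff ν d m ∧ m ≠ 0 := by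
  obtain ⟨c, rfl⟩ := im.free.surjective ν
  have hc : c ≠ 0 := by
    rintro rfl
    exact hν Finsupp.sum_zero_index
  obtain ⟨d, hsum, hd⟩ :=
    c.exists_sum_eq_sum_range hc (fun i m => op (sp.x ^ i) • im.j m) fun i => by simp
  exact ⟨d, c d, ⟨c, hsum, rfl⟩, hd⟩

theorem TopCoeff.essAnn (h : im.TopCoeff ν d m) (hν : EssAnn {f : S | op f • ν = 0}) :
    EssAnn {r : R | op r • m = 0} := by
  intro t ht
  set r := (σ ^ d).symm t
  have hr : sp.ι r ≠ 0 := (map_ne_zero_iff _ sp.ι_injective).mpr (by simpa [r] using ht)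
  obtain ⟨f, hf, hνf⟩ := hν _ hr
  obtain ⟨e, a, hsum, he⟩ := sp.exists_ι_mul_eq_sum_range r f hf
  have hlead : (σ ^ d) (r * a e) = t * (σ ^ d) (a e) := by
    rw [map_mul, RingEquiv.apply_symm_apply]
  refine ⟨(σ ^ d) (a e), ?_, ?_⟩
  · rw [← hlead]
    exact (map_ne_zero_iff _ (σ ^ d).injective).mpr he
  · have := h.smul_sum (fun l => r * a l) e
    rw [← hsum, hνf] at this
    show op (t * (σ ^ d) (a e)) • m = 0
    rw [← hlead]
    exact this.eq_zero_of_zero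

end Induced

theorem stmt10_general (sp : SkewPoly R S σ δ) (im : Induced R S M N sp)
    (hM : ∀ m : M, EssAnn {r : R | op r • m = 0} → m = 0) :
    ∀ ν : N, EssAnn {f : S | op f • ν = 0} → ν = 0 := by
  intro ν hν
  by_contra hν0
  obtain ⟨d, m, hd, hm⟩ := Induced.exists_topCoeff_ne_zero (im := im) hν0
  exact hm (hM m (hd.essAnn hν))

/-- if `M` is nonsingular as a right `R`-module, then the induced module
`M ⊗_R S` is nonsingular as a right `S`-module. -/
theorem stmt10 (sp : SkewPoly R S σ δ) (im : Induced R S M N sp) (hδ : IsSigmaDeriv σ δ)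
    (hM : ∀ m : M, EssAnn {r : R | op r • m = 0} → m = 0) :
    ∀ ν : N, EssAnn {f : S | op f • ν = 0} → ν = 0 :=
  stmt10_general sp im hM
end

section
/- Let R be a ring, σ an automorphism of R, δ a σ-derivation, S = R[x; σ, δ], and M a right R-module such that the induced module M ⊗_R S is good. If M has finite uniform dimension n, then M ⊗_R S has uniform dimension n as a right S-module; and if M has infinite uniform dimension, so does M ⊗_R S. In particular udim(M ⊗_R S) = udim(M_R). -/
open MulOpposite

variable {R S M N : Type} [Ring R] [Ring S] [AddCommGroup M] [Module Rᵐᵒᵖ M]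
  [AddCommGroup N] [Module Sᵐᵒᵖ N] {σ : R ≃+* R} {δ : R → R}

/-- A submodule is essential if it meets every nonzero submodule nontrivially. -/
def EssSub {T V : Type} [Ring T] [AddCommGroup V] [Module T V] (U : Submodule T V) : Prop :=
  ∀ W : Submodule T V, W ≠ ⊥ → U ⊓ W ≠ ⊥

/-- A submodule is uniform if it is nonzero and any two of its nonzero submodules
intersect nontrivially. -/
def UnifSub {T V : Type} [Ring T] [AddCommGroup V] [Module T V] (U : Submodule T V) : Prop :=
  U ≠ ⊥ ∧ ∀ A B : Submodule T V, A ≤ U → B ≤ U → A ≠ ⊥ → B ≠ ⊥ → A ⊓ B ≠ ⊥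

/-- `V` has uniform dimension `n`: there are `n` uniform submodules forming a direct sum
which is essential in `V`. -/
def HasUdim (T V : Type) [Ring T] [AddCommGroup V] [Module T V] (n : ℕ) : Prop :=
  ∃ U : Fin n → Submodule T V, (∀ i, UnifSub (U i)) ∧
    (∀ i, Disjoint (U i) (⨆ j ∈ ({i}ᶜ : Set (Fin n)), U j)) ∧ EssSub (⨆ i, U i)

/-- `V` has infinite uniform dimension: it contains an infinite direct sum of nonzero
submodules. -/
def InfUdim (T V : Type) [Ring T] [AddCommGroup V] [Module T V] : Prop :=
  ∃ U : ℕ → Submodule T V, (∀ i, U i ≠ ⊥) ∧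
    ∀ i, Disjoint (U i) (⨆ j ∈ ({i}ᶜ : Set ℕ), U j)

namespace Stmt11

open Finsupp

variable {R S M N : Type} [Ring R] [Ring S] [AddCommGroup M] [Module Rᵐᵒᵖ M]
  [AddCommGroup N] [Module Sᵐᵒᵖ N] {σ : R ≃+* R} {δ : R → R}

section Basic

variable (sp : SkewPoly R S σ δ) (im : Induced R S M N sp)

lemma pol_zero : pol sp im 0 = 0 := Finsupp.sum_zero_index

lemma pol_single (i : ℕ) (m : M) :
    pol sp im (Finsupp.single i m) = op (sp.x ^ i) • im.j m := by
  unfold pol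
  rw [Finsupp.sum_single_index]
  simp

lemma pol_add (c d : ℕ →₀ M) : pol sp im (c + d) = pol sp im c + pol sp im d := by
  unfold pol
  rw [Finsupp.sum_add_index]
  · intro i _; simp
  · intro i _ m m'; simp [smul_add]

/-- `pol` as an additive monoid hom. -/
noncomputable def polHom : (ℕ →₀ M) →+ N :=
  { toFun := pol sp im, map_zero' := pol_zero sp im, map_add' := pol_add sp im }

lemma polHom_apply (c : ℕ →₀ M) : polHom sp im c = pol sp im c := rfl

/-- The coefficients equivalence: inverse of `pol`. -/
noncomputable def CF : N ≃+ (ℕ →₀ M) :=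
  (AddEquiv.ofBijective (polHom sp im) im.free).symm

lemma CF_pol (c : ℕ →₀ M) : CF sp im (pol sp im c) = c :=
  (AddEquiv.ofBijective (polHom sp im) im.free).symm_apply_apply c

lemma pol_CF (ν : N) : pol sp im (CF sp im ν) = ν :=
  (AddEquiv.ofBijective (polHom sp im) im.free).apply_symm_apply ν

lemma CF_eq_zero_iff (ν : N) : CF sp im ν = 0 ↔ ν = 0 :=
  (CF sp im).map_eq_zero_iff

lemma CF_j (m : M) : CF sp im (im.j m) = Finsupp.single 0 m := by
  have : im.j m = pol sp im (Finsupp.single 0 m) := by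
    rw [pol_single]; simp
  rw [this, CF_pol]

lemma j_eq_zero_iff (m : M) : im.j m = 0 ↔ m = 0 := by
  constructor
  · intro h
    have := CF_j sp im m
    rw [h, map_zero] at this
    have := congrArg (fun c => c 0) this
    simpa using this.symm
  · intro h; simp [h]

lemma degEq_iff (ν : N) (k : ℕ) :
    DegEq sp im ν k ↔ (CF sp im ν k ≠ 0 ∧ ∀ i, k < i → CF sp im ν i = 0) := by
  constructor
  · rintro ⟨c, rfl, h1, h2⟩
    rw [CF_pol]; exact ⟨h1, h2⟩
  · rintro ⟨h1, h2⟩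
    exact ⟨CF sp im ν, pol_CF sp im ν, h1, h2⟩

lemma exists_degEq (ν : N) (hν : ν ≠ 0) : ∃ k, DegEq sp im ν k := by
  have hc : CF sp im ν ≠ 0 := by
    rw [Ne, CF_eq_zero_iff]; exact hν
  have hsupp : (CF sp im ν).support.Nonempty := by
    rw [Finsupp.support_nonempty_iff]; exact hc
  refine ⟨(CF sp im ν).support.max' hsupp, ?_⟩
  rw [degEq_iff]
  constructor
  · exact Finsupp.mem_support_iff.mp ((CF sp im ν).support.max'_mem hsupp)
  · intro i hi
    by_contra h
    exact absurd (Finset.le_max' _ i (Finsupp.mem_support_iff.mpr h)) (not_le.mpr hi)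

lemma degEq_ne_zero {ν : N} {k : ℕ} (h : DegEq sp im ν k) : ν ≠ 0 := by
  rw [degEq_iff] at h
  intro h0
  rw [h0, map_zero] at h
  exact h.1 rfl

end Basic

end Stmt11
namespace Stmt11

section Dcalc

variable {R : Type} [Ring R]

/-- Coefficients of `x^t * ι r` in the basis `ι a * x^s`. -/
noncomputable def Dc (σ : R ≃+* R) (δ : R → R) : ℕ → R → (ℕ →₀ R)
  | 0, r => Finsupp.single 0 r
  | (t+1), r => (Dc σ δ t (σ r)).mapDomain (· + 1) + Dc σ δ t (δ r)

variable (σ : R ≃+* R) (δ : R → R)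

lemma Dc_apply_gt : ∀ (t : ℕ) (r : R) (s : ℕ), t < s → Dc σ δ t r s = 0 := by
  intro t
  induction t with
  | zero =>
    intro r s hs
    simp only [Dc]
    exact Finsupp.single_eq_of_ne (by omega)
  | succ t IH =>
    intro r s hs
    simp only [Dc, Finsupp.add_apply]
    have h1 : (Dc σ δ t (σ r)).mapDomain (· + 1) s = Dc σ δ t (σ r) (s - 1) := by
      have : s = (s - 1) + 1 := by omega
      rw [this]
      exact Finsupp.mapDomain_apply (fun a b h => by omega) _ _
    rw [h1, IH _ _ (by omega), IH _ _ (by omega), add_zero]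

lemma Dc_apply_self : ∀ (t : ℕ) (r : R), Dc σ δ t r t = (⇑σ)^[t] r := by
  intro t
  induction t with
  | zero => intro r; simp [Dc]
  | succ t IH =>
    intro r
    simp only [Dc, Finsupp.add_apply]
    have h1 : (Dc σ δ t (σ r)).mapDomain (· + 1) (t + 1) = Dc σ δ t (σ r) t :=
      Finsupp.mapDomain_apply (fun a b h => by omega) _ _
    rw [h1, IH, Dc_apply_gt σ δ t _ (t+1) (by omega), add_zero,
      Function.iterate_succ_apply]

lemma Dc_add (hδ : IsSigmaDeriv σ δ) : ∀ (t : ℕ) (r r' : R),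
    Dc σ δ t (r + r') = Dc σ δ t r + Dc σ δ t r' := by
  intro t
  induction t with
  | zero => intro r r'; simp [Dc, Finsupp.single_add]
  | succ t IH =>
    intro r r'
    simp only [Dc, map_add, hδ.1 r r', IH]
    rw [Finsupp.mapDomain_add]
    abel

end Dcalc

section CommPow

variable {R S M N : Type} [Ring R] [Ring S] [AddCommGroup M] [Module Rᵐᵒᵖ M]
  [AddCommGroup N] [Module Sᵐᵒᵖ N] {σ : R ≃+* R} {δ : R → R}
variable (sp : SkewPoly R S σ δ)

lemma comm_pow : ∀ (t : ℕ) (r : R),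
    sp.x ^ t * sp.ι r = (Dc σ δ t r).sum fun s a => sp.ι a * sp.x ^ s := by
  intro t
  induction t with
  | zero =>
    intro r
    simp only [Dc, pow_zero, one_mul]
    rw [Finsupp.sum_single_index] <;> simp
  | succ t IH =>
    intro r
    have hx : sp.x ^ (t + 1) * sp.ι r = sp.x ^ t * (sp.x * sp.ι r) := by
      rw [pow_succ, mul_assoc]
    rw [hx, sp.comm, mul_add, ← mul_assoc, IH (σ r), IH (δ r)]
    simp only [Dc]
    rw [Finsupp.sum_add_index (by intro s _; simp) (by intro s _ a a'; simp [map_add, add_mul]),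
      Finsupp.sum_mapDomain_index (by intro s; simp) (by intro s a a'; simp [map_add, add_mul])]
    congr 1
    rw [Finsupp.sum, Finset.sum_mul]
    apply Finset.sum_congr rfl
    intro s _
    rw [mul_assoc, ← pow_succ]

end CommPow

end Stmt11
namespace Stmt11

open Finsupp

variable {R S M N : Type} [Ring R] [Ring S] [AddCommGroup M] [Module Rᵐᵒᵖ M]
  [AddCommGroup N] [Module Sᵐᵒᵖ N] {σ : R ≃+* R} {δ : R → R}

section Action

variable (sp : SkewPoly R S σ δ) (im : Induced R S M N sp)

/-- Coefficientwise form of right multiplication of `j m · x^t` by `r`. -/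
noncomputable def mapD (σ : R ≃+* R) (δ : R → R) (t : ℕ) (r : R) (m : M) : ℕ →₀ M :=
  (Dc σ δ t r).sum fun s a => Finsupp.single s (op a • m)

lemma mapD_apply (t : ℕ) (r : R) (m : M) (s : ℕ) :
    mapD σ δ t r m s = op (Dc σ δ t r s) • m := by
  unfold mapD
  rw [Finsupp.sum, Finsupp.finset_sum_apply]
  rw [Finset.sum_eq_single s]
  · rw [Finsupp.single_eq_same]
  · intro b _ hb
    exact Finsupp.single_eq_of_ne hb.symm
  · intro hs
    rw [Finsupp.notMem_support_iff.mp hs]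
    simp

lemma mapD_zero (t : ℕ) (r : R) : mapD σ δ t r (0 : M) = 0 := by
  unfold mapD
  simp

lemma mapD_add (t : ℕ) (r : R) (m m' : M) :
    mapD σ δ t r (m + m') = mapD σ δ t r m + mapD σ δ t r m' := by
  ext s
  simp [mapD_apply, smul_add]

lemma pol_mapD (t : ℕ) (r : R) (m : M) :
    pol sp im (mapD σ δ t r m) = op (sp.x ^ t * sp.ι r) • im.j m := by
  have h1 : ∀ (s : ℕ) (a : R), op (sp.x ^ s) • im.j (op a • m) = op (sp.ι a * sp.x ^ s) • im.j m := by
    intro s a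
    rw [im.j_smul, ← mul_smul, ← op_mul]
  calc pol sp im (mapD σ δ t r m)
      = (Dc σ δ t r).sum fun s a => pol sp im (Finsupp.single s (op a • m)) :=
        map_finsuppSum (polHom sp im) _ _
    _ = (Dc σ δ t r).sum fun s a => op (sp.ι a * sp.x ^ s) • im.j m :=
        Finsupp.sum_congr (fun s _ => by rw [pol_single, h1])
    _ = op ((Dc σ δ t r).sum fun s a => sp.ι a * sp.x ^ s) • im.j m := by
        rw [Finsupp.sum, Finsupp.sum, Finset.op_sum, Finset.sum_smul]
    _ = op (sp.x ^ t * sp.ι r) • im.j m := by rw [← comm_pow]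

lemma smul_iota_pol (r : R) (c : ℕ →₀ M) :
    op (sp.ι r) • pol sp im c = pol sp im (c.sum fun t m => mapD σ δ t r m) := by
  calc op (sp.ι r) • pol sp im c
      = c.sum fun t m => op (sp.ι r) • (op (sp.x ^ t) • im.j m) := by
        unfold pol; rw [Finsupp.smul_sum]
    _ = c.sum fun t m => pol sp im (mapD σ δ t r m) :=
        Finsupp.sum_congr (fun t _ => by rw [← mul_smul, ← op_mul, pol_mapD])
    _ = pol sp im (c.sum fun t m => mapD σ δ t r m) :=
        (map_finsuppSum (polHom sp im) _ _).symm

end Action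

end Stmt11
namespace Stmt11

open Finsupp

variable {R S M N : Type} [Ring R] [Ring S] [AddCommGroup M] [Module Rᵐᵒᵖ M]
  [AddCommGroup N] [Module Sᵐᵒᵖ N] {σ : R ≃+* R} {δ : R → R}

section Action2

variable (sp : SkewPoly R S σ δ) (im : Induced R S M N sp)

/-- Coefficientwise right multiplication by `r`. -/
noncomputable def rmulCF (σ : R ≃+* R) (δ : R → R) (r : R) (c : ℕ →₀ M) : ℕ →₀ M :=
  c.sum fun t m => mapD σ δ t r m

lemma rmulCF_apply (r : R) (c : ℕ →₀ M) (s : ℕ) :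
    rmulCF σ δ r c s = ∑ t ∈ c.support, op (Dc σ δ t r s) • c t := by
  unfold rmulCF
  rw [Finsupp.sum, Finsupp.finset_sum_apply]
  exact Finset.sum_congr rfl (fun t _ => mapD_apply t r (c t) s)

lemma CF_smul_iota (r : R) (ν : N) :
    CF sp im (op (sp.ι r) • ν) = rmulCF σ δ r (CF sp im ν) := by
  conv_lhs => rw [← pol_CF sp im ν]
  rw [smul_iota_pol, CF_pol]
  rfl

lemma CF_smul_iota_bound {ν : N} {e : ℕ} (h : ∀ i, e < i → CF sp im ν i = 0) (r : R) :
    ∀ i, e < i → CF sp im (op (sp.ι r) • ν) i = 0 := by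
  intro i hi
  rw [CF_smul_iota, rmulCF_apply]
  apply Finset.sum_eq_zero
  intro t ht
  have htle : t ≤ e := by
    by_contra h'
    exact (Finsupp.mem_support_iff.mp ht) (h t (by omega))
  rw [Dc_apply_gt σ δ t r i (by omega)]
  simp

lemma CF_smul_iota_top {ν : N} {e : ℕ} (h : ∀ i, e < i → CF sp im ν i = 0) (r : R) :
    CF sp im (op (sp.ι r) • ν) e = op ((⇑σ)^[e] r) • CF sp im ν e := by
  rw [CF_smul_iota, rmulCF_apply]
  rw [Finset.sum_eq_single e]
  · rw [Dc_apply_self]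
  · intro t ht hne
    rcases Ne.lt_or_gt hne with h' | h'
    · rw [Dc_apply_gt σ δ t r e h']; simp
    · exact absurd (h t h') (Finsupp.mem_support_iff.mp ht)
  · intro he
    rw [Finsupp.notMem_support_iff.mp he]
    simp

lemma CF_smul_iota_mem {V : Submodule Rᵐᵒᵖ M} {ν : N} (h : ∀ i, CF sp im ν i ∈ V) (r : R) :
    ∀ i, CF sp im (op (sp.ι r) • ν) i ∈ V := by
  intro i
  rw [CF_smul_iota, rmulCF_apply]
  exact Submodule.sum_mem _ (fun t _ => V.smul_mem _ (h t))

lemma smul_xpow_pol (k : ℕ) (c : ℕ →₀ M) :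
    op (sp.x ^ k) • pol sp im c = pol sp im (c.mapDomain (· + k)) := by
  calc op (sp.x ^ k) • pol sp im c
      = c.sum fun t m => op (sp.x ^ k) • (op (sp.x ^ t) • im.j m) := by
        unfold pol; rw [Finsupp.smul_sum]
    _ = c.sum fun t m => op (sp.x ^ (t + k)) • im.j m :=
        Finsupp.sum_congr (fun t _ => by rw [← mul_smul, ← op_mul, ← pow_add])
    _ = pol sp im (c.mapDomain (· + k)) := by
        unfold pol
        rw [Finsupp.sum_mapDomain_index (by intro a; simp) (by intro a m m'; rw [map_add, smul_add])]

lemma CF_smul_xpow (k : ℕ) (ν : N) (i : ℕ) :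
    CF sp im (op (sp.x ^ k) • ν) i = if k ≤ i then CF sp im ν (i - k) else 0 := by
  conv_lhs => rw [← pol_CF sp im ν]
  rw [smul_xpow_pol, CF_pol]
  split
  · next hki =>
    have hi : i = (i - k) + k := by omega
    have h2 : (Finsupp.mapDomain (fun x => x + k) (CF sp im ν)) ((i - k) + k)
        = CF sp im ν (i - k) :=
      Finsupp.mapDomain_apply (fun a b hab => Nat.add_right_cancel hab) _ _
    rw [← hi] at h2
    exact h2
  · next hki =>
    refine Finsupp.mapDomain_notin_range _ _ ?_
    rintro ⟨a, ha⟩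
    simp only at ha
    omega

lemma smul_decomp (fc : ℕ →₀ R) (ν : N) :
    op (fc.sum fun i a => sp.ι a * sp.x ^ i) • ν =
      fc.sum fun t a => op (sp.x ^ t) • (op (sp.ι a) • ν) := by
  rw [Finsupp.sum, Finsupp.sum, Finset.op_sum, Finset.sum_smul]
  apply Finset.sum_congr rfl
  intro t _
  rw [op_mul, mul_smul]

lemma exists_fc (f : S) : ∃ fc : ℕ →₀ R, f = fc.sum fun i a => sp.ι a * sp.x ^ i := by
  obtain ⟨fc, h⟩ := sp.basis.surjective f
  exact ⟨fc, h.symm⟩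

end Action2

end Stmt11
namespace Stmt11

open Finsupp

variable {R S M N : Type} [Ring R] [Ring S] [AddCommGroup M] [Module Rᵐᵒᵖ M]
  [AddCommGroup N] [Module Sᵐᵒᵖ N] {σ : R ≃+* R} {δ : R → R}

section Star

variable (sp : SkewPoly R S σ δ) (im : Induced R S M N sp)

/-- The induced submodule `V ⊗_R S` of `M ⊗_R S`. -/
noncomputable def star (V : Submodule Rᵐᵒᵖ M) : Submodule Sᵐᵒᵖ N where
  carrier := {ν | ∀ i, CF sp im ν i ∈ V}
  zero_mem' := by
    intro i
    rw [map_zero]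
    exact V.zero_mem
  add_mem' := by
    intro a b ha hb i
    rw [map_add, Finsupp.add_apply]
    exact V.add_mem (ha i) (hb i)
  smul_mem' := by
    intro a ν hν
    obtain ⟨fc, hfc⟩ := exists_fc sp (unop a)
    have ha : a = op (fc.sum fun i a => sp.ι a * sp.x ^ i) := by rw [← hfc, op_unop]
    intro i
    rw [ha, smul_decomp, map_finsuppSum (CF sp im), Finsupp.sum, Finsupp.finset_sum_apply]
    apply Submodule.sum_mem
    intro t _
    rw [CF_smul_xpow]
    split
    · exact CF_smul_iota_mem sp im hν _ _
    · exact V.zero_mem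

lemma mem_star {V : Submodule Rᵐᵒᵖ M} {ν : N} :
    ν ∈ star sp im V ↔ ∀ i, CF sp im ν i ∈ V := Iff.rfl

lemma star_mono {V W : Submodule Rᵐᵒᵖ M} (h : V ≤ W) : star sp im V ≤ star sp im W :=
  fun _ hν i => h (hν i)

lemma star_inf (V W : Submodule Rᵐᵒᵖ M) :
    star sp im (V ⊓ W) = star sp im V ⊓ star sp im W := by
  ext ν
  rw [Submodule.mem_inf, mem_star, mem_star, mem_star]
  constructor
  · intro h
    exact ⟨fun i => (h i).1, fun i => (h i).2⟩
  · rintro ⟨h1, h2⟩ i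
    exact ⟨h1 i, h2 i⟩

lemma star_bot : star sp im (⊥ : Submodule Rᵐᵒᵖ M) = ⊥ := by
  ext ν
  rw [mem_star, Submodule.mem_bot]
  constructor
  · intro h
    rw [← CF_eq_zero_iff sp im]
    ext i
    simpa using h i
  · rintro rfl i
    rw [map_zero]
    rfl

lemma j_mem_star {V : Submodule Rᵐᵒᵖ M} {m : M} (hm : m ∈ V) :
    im.j m ∈ star sp im V := by
  intro i
  rw [CF_j, Finsupp.single_apply]
  split
  · exact hm
  · exact V.zero_mem

lemma star_ne_bot {V : Submodule Rᵐᵒᵖ M} (h : V ≠ ⊥) : star sp im V ≠ ⊥ := by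
  obtain ⟨m, hm, hm0⟩ := Submodule.ne_bot_iff V |>.mp h
  rw [Submodule.ne_bot_iff]
  exact ⟨im.j m, j_mem_star sp im hm, fun h0 => hm0 ((j_eq_zero_iff sp im m).mp h0)⟩

lemma star_iSup_le {ι : Type} (V : ι → Submodule Rᵐᵒᵖ M) :
    star sp im (⨆ i, V i) ≤ ⨆ i, star sp im (V i) := by
  intro ν hν
  have hpol : ν = (CF sp im ν).sum fun s m => op (sp.x ^ s) • im.j m := (pol_CF sp im ν).symm
  rw [hpol, Finsupp.sum]
  apply Submodule.sum_mem
  intro s hs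
  have hmem : CF sp im ν s ∈ ⨆ i, V i := hν s
  refine Submodule.iSup_induction (motive := fun (m : M) => op (sp.x ^ s) • im.j m ∈ ⨆ i, star sp im (V i)) V hmem ?_ ?_ ?_
  · intro i m hm
    exact Submodule.mem_iSup_of_mem i (Submodule.smul_mem _ _ (j_mem_star sp im hm))
  · show op (sp.x ^ s) • im.j 0 ∈ _
    rw [map_zero, smul_zero]
    exact Submodule.zero_mem _
  · intro m m' hm hm'
    show op (sp.x ^ s) • im.j (m + m') ∈ _
    rw [map_add, smul_add]
    exact Submodule.add_mem _ hm hm'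

lemma star_iSup {ι : Type} (V : ι → Submodule Rᵐᵒᵖ M) :
    star sp im (⨆ i, V i) = ⨆ i, star sp im (V i) := by
  apply le_antisymm (star_iSup_le sp im V)
  exact iSup_le fun i => star_mono sp im (le_iSup V i)

lemma span_j_eq (m : M) :
    Submodule.span Sᵐᵒᵖ {im.j m} = star sp im (Submodule.span Rᵐᵒᵖ {m}) := by
  classical
  apply le_antisymm
  · rw [Submodule.span_le, Set.singleton_subset_iff]
    exact j_mem_star sp im (Submodule.mem_span_singleton_self m)
  · intro ν hν
    have hch : ∀ i, ∃ a : Rᵐᵒᵖ, a • m = CF sp im ν i := fun i =>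
      Submodule.mem_span_singleton.mp (hν i)
    choose a ha using hch
    refine Submodule.mem_span_singleton.mpr
      ⟨op (∑ i ∈ (CF sp im ν).support, sp.ι (unop (a i)) * sp.x ^ i), ?_⟩
    rw [Finset.op_sum, Finset.sum_smul]
    have h1 : ∀ i, op (sp.ι (unop (a i)) * sp.x ^ i) • im.j m
        = op (sp.x ^ i) • im.j (CF sp im ν i) := by
      intro i
      rw [op_mul, mul_smul, ← im.j_smul, op_unop, ha i]
    rw [Finset.sum_congr rfl (fun i _ => h1 i)]
    exact pol_CF sp im ν

end Star

end Stmt11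
namespace Stmt11

open Finsupp

variable {R S M N : Type} [Ring R] [Ring S] [AddCommGroup M] [Module Rᵐᵒᵖ M]
  [AddCommGroup N] [Module Sᵐᵒᵖ N] {σ : R ≃+* R} {δ : R → R}

lemma sigma_iter_symm (σ : R ≃+* R) (d : ℕ) (v : R) : (⇑σ)^[d] ((⇑σ.symm)^[d] v) = v :=
  (Function.LeftInverse.iterate σ.apply_symm_apply d) v

section Goodness

variable (sp : SkewPoly R S σ δ) (im : Induced R S M N sp)

lemma good_bound {g : N} {k : ℕ} (hg : GoodAt sp im g k) :
    ∀ i, k < i → CF sp im g i = 0 := ((degEq_iff sp im g k).mp hg.1).2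

lemma good_topne {g : N} {k : ℕ} (hg : GoodAt sp im g k) : CF sp im g k ≠ 0 :=
  ((degEq_iff sp im g k).mp hg.1).1

lemma goodAt_smul_iota {g : N} {k : ℕ} (hg : GoodAt sp im g k) (r : R)
    (h0 : op (sp.ι r) • g ≠ 0) : GoodAt sp im (op (sp.ι r) • g) k := by
  refine ⟨hg.2 r h0, ?_⟩
  intro r' h0'
  have hcomp : op (sp.ι r') • (op (sp.ι r) • g) = op (sp.ι (r * r')) • g := by
    rw [← mul_smul, ← op_mul, ← map_mul]
  rw [hcomp] at h0' ⊢
  exact hg.2 _ h0'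

lemma good_top_formula {g : N} {k : ℕ} (hg : GoodAt sp im g k) (r : R) :
    CF sp im (op (sp.ι r) • g) k = op ((⇑σ)^[k] r) • CF sp im g k :=
  CF_smul_iota_top sp im (good_bound sp im hg) r

lemma good_smul_iota_eq_zero {g : N} {k : ℕ} (hg : GoodAt sp im g k) (r : R)
    (h : op ((⇑σ)^[k] r) • CF sp im g k = 0) : op (sp.ι r) • g = 0 := by
  by_contra h0
  have hd := hg.2 r h0
  rw [degEq_iff] at hd
  apply hd.1
  rw [good_top_formula sp im hg r]
  exact h

lemma good_smul_decomp_eq_zero_iff {g : N} {k : ℕ} (hg : GoodAt sp im g k) (fc : ℕ →₀ R) :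
    op (fc.sum fun i a => sp.ι a * sp.x ^ i) • g = 0 ↔ ∀ t, op (sp.ι (fc t)) • g = 0 := by
  classical
  constructor
  · intro h
    by_contra hex
    push_neg at hex
    obtain ⟨t₀, ht₀⟩ := hex
    have ht₀s : t₀ ∈ fc.support := by
      rw [Finsupp.mem_support_iff]
      intro h0
      apply ht₀
      rw [h0, map_zero]
      simp
    have hfil : ((fc.support.filter (fun t => op (sp.ι (fc t)) • g ≠ 0))).Nonempty :=
      ⟨t₀, Finset.mem_filter.mpr ⟨ht₀s, ht₀⟩⟩
    set T := (fc.support.filter (fun t => op (sp.ι (fc t)) • g ≠ 0)).max' hfil with hT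
    have hTfil : T ∈ fc.support.filter (fun t => op (sp.ι (fc t)) • g ≠ 0) :=
      Finset.max'_mem _ hfil
    have hTne : op (sp.ι (fc T)) • g ≠ 0 := (Finset.mem_filter.mp hTfil).2
    have heval : CF sp im (op (fc.sum fun i a => sp.ι a * sp.x ^ i) • g) (k + T)
        = CF sp im (op (sp.ι (fc T)) • g) k := by
      rw [smul_decomp, map_finsuppSum (CF sp im), Finsupp.sum, Finsupp.finset_sum_apply]
      rw [Finset.sum_eq_single T]
      · rw [CF_smul_xpow, if_pos (by omega)]
        congr 1
        omega
      · intro t ht hne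
        rw [CF_smul_xpow]
        split
        · by_cases hz : op (sp.ι (fc t)) • g = 0
          · rw [hz, map_zero]
            rfl
          · have htT : t ≤ T := Finset.le_max' _ t (Finset.mem_filter.mpr ⟨ht, hz⟩)
            have hlt : t < T := lt_of_le_of_ne htT hne
            have hd := hg.2 (fc t) hz
            rw [degEq_iff] at hd
            exact hd.2 _ (by omega)
        · rfl
      · intro hT'
        exact absurd (Finset.mem_of_mem_filter _ hTfil) hT'
    rw [h, map_zero] at heval
    have := hg.2 (fc T) hTne
    rw [degEq_iff] at this
    exact this.1 heval.symm
  · intro h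
    rw [smul_decomp]
    apply Finset.sum_eq_zero
    intro t _
    show op (sp.x ^ t) • (op (sp.ι (fc t)) • g) = 0
    rw [h t, smul_zero]

lemma exists_min_good (ν : N) (hν : ν ≠ 0) {e : ℕ} (he : DegEq sp im ν e) :
    ∃ g d, g ∈ Submodule.span Sᵐᵒᵖ {ν} ∧ GoodAt sp im g d ∧ d ≤ e := by
  classical
  set K := {k | ∃ w ∈ Submodule.span Sᵐᵒᵖ {ν}, w ≠ 0 ∧ DegEq sp im w k} with hK
  have hKe : e ∈ K := ⟨ν, Submodule.mem_span_singleton_self ν, hν, he⟩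
  obtain ⟨g, hgspan, hg0, hgdeg⟩ := Nat.sInf_mem (⟨e, hKe⟩ : K.Nonempty)
  refine ⟨g, sInf K, hgspan, ⟨hgdeg, ?_⟩, Nat.sInf_le hKe⟩
  intro r h0
  have hw : op (sp.ι r) • g ∈ Submodule.span Sᵐᵒᵖ {ν} := Submodule.smul_mem _ _ hgspan
  obtain ⟨d', hd'⟩ := exists_degEq sp im _ h0
  have h1 : sInf K ≤ d' := Nat.sInf_le ⟨_, hw, h0, hd'⟩
  have h2 : d' ≤ sInf K := by
    by_contra hlt
    push_neg at hlt
    have hb := (degEq_iff sp im g (sInf K)).mp hgdeg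
    have hz := CF_smul_iota_bound sp im hb.2 r d' hlt
    exact ((degEq_iff sp im _ d').mp hd').1 hz
  rw [← le_antisymm h2 h1]
  exact hd'

lemma degEq_zero_eq_j {ν : N} (h : DegEq sp im ν 0) : ν = im.j (CF sp im ν 0) := by
  have hb := (degEq_iff sp im ν 0).mp h
  have hsingle : CF sp im ν = Finsupp.single 0 (CF sp im ν 0) := by
    ext i
    rcases Nat.eq_zero_or_pos i with rfl | hi
    · rw [Finsupp.single_eq_same]
    · rw [hb.2 i hi, Finsupp.single_eq_of_ne (by omega)]
  conv_lhs => rw [← pol_CF sp im ν, hsingle]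
  rw [pol_single]
  simp

end Goodness

end Stmt11
namespace Stmt11

open Finsupp

variable {R S M N : Type} [Ring R] [Ring S] [AddCommGroup M] [Module Rᵐᵒᵖ M]
  [AddCommGroup N] [Module Sᵐᵒᵖ N] {σ : R ≃+* R} {δ : R → R}

section MainEss

variable (sp : SkewPoly R S σ δ) (im : Induced R S M N sp)

lemma goodAt_j {m : M} (hm : m ≠ 0) : GoodAt sp im (im.j m) 0 := by
  have hdeg : ∀ (m' : M), m' ≠ 0 → DegEq sp im (im.j m') 0 := by
    intro m' hm'
    rw [degEq_iff]
    refine ⟨?_, ?_⟩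
    · rw [CF_j, Finsupp.single_eq_same]; exact hm'
    · intro i hi; rw [CF_j, Finsupp.single_eq_of_ne (by omega)]
  refine ⟨hdeg m hm, ?_⟩
  intro r h0
  rw [← im.j_smul] at h0 ⊢
  apply hdeg
  intro hz
  apply h0
  rw [hz, map_zero]

/-- Core essentiality lemma: if `E` is essential in `U`, then every good polynomial with
coefficients in `U` has a nonzero multiple lying in `E ⊗ S`. -/
lemma ess_core (hgood : ∀ (ν : N) (k : ℕ), GoodAt sp im ν k →
      ∀ n, k ≤ n → ∃ f : S, GoodAt sp im (op f • ν) n)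
    (U E : Submodule Rᵐᵒᵖ M) (hEU : E ≤ U)
    (hEss : ∀ m ∈ U, m ≠ 0 → ∃ v : Rᵐᵒᵖ, v • m ∈ E ∧ v • m ≠ 0) :
    ∀ d (g : N), GoodAt sp im g d → g ∈ star sp im U →
      ∃ ξ, ξ ≠ 0 ∧ ξ ∈ Submodule.span Sᵐᵒᵖ {g} ∧ ξ ∈ star sp im E := by
  intro d
  induction' d using Nat.strong_induction_on with d IH
  intro g hg hgU
  -- Step 1: make the top coefficient land in `E`.
  obtain ⟨v₀, hv₀E, hv₀0⟩ := hEss (CF sp im g d) (hgU d) (good_topne sp im hg)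
  set r₀ := (⇑σ.symm)^[d] (unop v₀) with hr₀
  have hσr₀ : (⇑σ)^[d] r₀ = unop v₀ := sigma_iter_symm σ d _
  set g₀ := op (sp.ι r₀) • g with hg₀def
  have hg₀top : CF sp im g₀ d = v₀ • CF sp im g d := by
    rw [hg₀def, good_top_formula sp im hg, hσr₀, op_unop]
  have hg₀ne : g₀ ≠ 0 := by
    intro h0
    apply hv₀0
    rw [← hg₀top, h0, map_zero]
    rfl
  have hg₀good : GoodAt sp im g₀ d := goodAt_smul_iota sp im hg r₀ hg₀ne
  have hg₀U : g₀ ∈ star sp im U := (star sp im U).smul_mem _ hgU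
  have hg₀span : g₀ ∈ Submodule.span Sᵐᵒᵖ {g} :=
    Submodule.smul_mem _ _ (Submodule.mem_span_singleton_self g)
  have he₀E : CF sp im g₀ d ∈ E := by rw [hg₀top]; exact hv₀E
  have he₀ne : CF sp im g₀ d ≠ 0 := by rw [hg₀top]; exact hv₀0
  rcases Nat.eq_zero_or_pos d with rfl | hd
  · -- base case: degree 0
    refine ⟨g₀, hg₀ne, hg₀span, ?_⟩
    intro i
    rcases Nat.eq_zero_or_pos i with rfl | hi
    · exact he₀E
    · rw [good_bound sp im hg₀good i hi]; exact E.zero_mem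
  -- inductive case
  · set e₀ := CF sp im g₀ d with he₀def
    obtain ⟨f₀, hf₀⟩ := hgood (im.j e₀) 0 (goodAt_j sp im he₀ne) d (Nat.zero_le d)
    set h := op f₀ • im.j e₀ with hhdef
    have hhgood : GoodAt sp im h d := hf₀
    have hhmem : h ∈ Submodule.span Sᵐᵒᵖ {im.j e₀} :=
      Submodule.smul_mem _ _ (Submodule.mem_span_singleton_self _)
    have hhstar : h ∈ star sp im (Submodule.span Rᵐᵒᵖ {e₀}) := (span_j_eq sp im e₀) ▸ hhmem
    have hspanE : Submodule.span Rᵐᵒᵖ {e₀} ≤ E := by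
      rw [Submodule.span_le, Set.singleton_subset_iff]; exact he₀E
    have hhE : h ∈ star sp im E := star_mono sp im hspanE hhstar
    obtain ⟨u, hu⟩ := Submodule.mem_span_singleton.mp (hhstar d)
    set r₁ := (⇑σ.symm)^[d] (unop u) with hr₁
    have hσr₁ : (⇑σ)^[d] r₁ = unop u := sigma_iter_symm σ d _
    set g₁ := op (sp.ι r₁) • g₀ with hg₁def
    have hg₁top : CF sp im g₁ d = CF sp im h d := by
      rw [hg₁def, good_top_formula sp im hg₀good, hσr₁, op_unop, hu]
    have hg₁ne : g₁ ≠ 0 := by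
      intro h0
      apply good_topne sp im hhgood
      rw [← hg₁top, h0, map_zero]
      rfl
    have hg₁good := goodAt_smul_iota sp im hg₀good r₁ hg₁ne
    have hg₁span : g₁ ∈ Submodule.span Sᵐᵒᵖ {g} := Submodule.smul_mem _ _ hg₀span
    have hg₁U : g₁ ∈ star sp im U := (star sp im U).smul_mem _ hg₀U
    set ν := g₁ - h with hνdef
    by_cases hν0 : ν = 0
    · have hgh : g₁ = h := by rwa [sub_eq_zero] at hν0
      exact ⟨g₁, hg₁ne, hg₁span, hgh ▸ hhE⟩
    · have hνb : ∀ i, d ≤ i → CF sp im ν i = 0 := by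
        intro i hi
        rw [hνdef, map_sub, Finsupp.sub_apply]
        rcases lt_or_eq_of_le hi with hlt | rfl
        · rw [good_bound sp im hg₁good i hlt, good_bound sp im hhgood i hlt, sub_zero]
        · rw [hg₁top]; exact sub_self _
      obtain ⟨Dν, hDν⟩ := exists_degEq sp im ν hν0
      have hDνlt : Dν < d := by
        by_contra hge
        push_neg at hge
        exact ((degEq_iff sp im ν Dν).mp hDν).1 (hνb Dν hge)
      obtain ⟨g', d', hg'span, hg'good, hd'le⟩ := exists_min_good sp im ν hν0 hDν
      have hd' : d' < d := lt_of_le_of_lt hd'le hDνlt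
      have hνU : ν ∈ star sp im U := (star sp im U).sub_mem hg₁U (star_mono sp im hEU hhE)
      have hg'U : g' ∈ star sp im U := by
        have hle : Submodule.span Sᵐᵒᵖ {ν} ≤ star sp im U := by
          rw [Submodule.span_le, Set.singleton_subset_iff]; exact hνU
        exact hle hg'span
      obtain ⟨ξ', hξ'ne, hξ'span, hξ'E⟩ := IH d' hd' g' hg'good hg'U
      have hξν : ξ' ∈ Submodule.span Sᵐᵒᵖ {ν} := by
        have hle : Submodule.span Sᵐᵒᵖ {g'} ≤ Submodule.span Sᵐᵒᵖ {ν} := by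
          rw [Submodule.span_le, Set.singleton_subset_iff]; exact hg'span
        exact hle hξ'span
      obtain ⟨aξ, haξ⟩ := Submodule.mem_span_singleton.mp hξν
      set cand := aξ • g₁ with hcand
      have hcandE : cand ∈ star sp im E := by
        have h1 : cand = ξ' + aξ • h := by
          rw [hcand, ← haξ, hνdef, smul_sub]
          abel
        rw [h1]
        exact (star sp im E).add_mem hξ'E ((star sp im E).smul_mem _ hhE)
      have hcandspan : cand ∈ Submodule.span Sᵐᵒᵖ {g} := Submodule.smul_mem _ _ hg₁span
      by_cases hcne : cand = 0
      · exfalso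
        obtain ⟨fc, hfc⟩ := exists_fc sp (unop aξ)
        have haop : aξ = op (fc.sum fun i a => sp.ι a * sp.x ^ i) := by rw [← hfc, op_unop]
        have hz1 : ∀ t, op (sp.ι (fc t)) • g₁ = 0 := by
          rw [hcand, haop] at hcne
          exact (good_smul_decomp_eq_zero_iff sp im hg₁good fc).mp hcne
        have hz2 : ∀ t, op (sp.ι (fc t)) • h = 0 := by
          intro t
          apply good_smul_iota_eq_zero sp im hhgood
          have htf := good_top_formula sp im hg₁good (fc t)
          rw [hz1 t, map_zero] at htf
          rw [← hg₁top]
          simpa using htf.symm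
        apply hξ'ne
        rw [← haξ, hνdef, smul_sub]
        have hhz : aξ • h = 0 := by
          rw [haop]
          exact (good_smul_decomp_eq_zero_iff sp im hhgood fc).mpr hz2
        rw [← hcand, hcne, hhz, sub_zero]
      · exact ⟨cand, hcne, hcandspan, hcandE⟩

end MainEss

end Stmt11
namespace Stmt11

open Finsupp

variable {R S M N : Type} [Ring R] [Ring S] [AddCommGroup M] [Module Rᵐᵒᵖ M]
  [AddCommGroup N] [Module Sᵐᵒᵖ N] {σ : R ≃+* R} {δ : R → R}

section MainUnif

variable (sp : SkewPoly R S σ δ) (im : Induced R S M N sp)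

/-- Core uniformity lemma: if `U` is uniform, then the cyclic modules generated by any two
good polynomials with coefficients in `U` intersect nontrivially. -/
lemma unif_core (hgood : ∀ (ν : N) (k : ℕ), GoodAt sp im ν k →
      ∀ n, k ≤ n → ∃ f : S, GoodAt sp im (op f • ν) n)
    (U : Submodule Rᵐᵒᵖ M)
    (hUn : ∀ m ∈ U, ∀ m' ∈ U, m ≠ 0 → m' ≠ 0 →
      ∃ a b : Rᵐᵒᵖ, a • m = b • m' ∧ a • m ≠ 0) :
    ∀ n dp dq (p q : N), dp + dq = n → GoodAt sp im p dp → GoodAt sp im q dq →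
      p ∈ star sp im U → q ∈ star sp im U →
      ∃ ξ, ξ ≠ 0 ∧ ξ ∈ Submodule.span Sᵐᵒᵖ {p} ∧ ξ ∈ Submodule.span Sᵐᵒᵖ {q} := by
  intro n
  induction' n using Nat.strong_induction_on with n IH
  have main : ∀ dp dq (p q : N), dp + dq = n → dq ≤ dp → GoodAt sp im p dp →
      GoodAt sp im q dq → p ∈ star sp im U → q ∈ star sp im U →
      ∃ ξ, ξ ≠ 0 ∧ ξ ∈ Submodule.span Sᵐᵒᵖ {p} ∧ ξ ∈ Submodule.span Sᵐᵒᵖ {q} := by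
    intro dp dq p q hsum hle hp hq hpU hqU
    rcases Nat.eq_zero_or_pos dq with rfl | hdq
    · -- base case: `q` has degree `0`, i.e. `q = j m`.
      set m := CF sp im q 0 with hm
      have hqj : q = im.j m := degEq_zero_eq_j sp im hq.1
      have hmne : m ≠ 0 := good_topne sp im hq
      have hmU : m ∈ U := hqU 0
      have hEss : ∀ m' ∈ U, m' ≠ 0 →
          ∃ v : Rᵐᵒᵖ, v • m' ∈ Submodule.span Rᵐᵒᵖ {m} ∧ v • m' ≠ 0 := by
        intro m' hm'U hm'0
        obtain ⟨a, b, hab, hane⟩ := hUn m' hm'U m hmU hm'0 hmne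
        exact ⟨a, Submodule.mem_span_singleton.mpr ⟨b, hab.symm⟩, hane⟩
      have hEU : Submodule.span Rᵐᵒᵖ {m} ≤ U := by
        rw [Submodule.span_le, Set.singleton_subset_iff]; exact hmU
      obtain ⟨ξ, hξne, hξp, hξE⟩ := ess_core sp im hgood U _ hEU hEss dp p hp hpU
      refine ⟨ξ, hξne, hξp, ?_⟩
      rw [hqj, span_j_eq sp im m]
      exact hξE
    · -- inductive step: `1 ≤ dq ≤ dp`.
      obtain ⟨f, hf⟩ := hgood q dq hq dp hle
      set q₁ := op f • q with hq₁def
      have hq₁good : GoodAt sp im q₁ dp := hf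
      have hq₁span : q₁ ∈ Submodule.span Sᵐᵒᵖ {q} :=
        Submodule.smul_mem _ _ (Submodule.mem_span_singleton_self q)
      have hq₁U : q₁ ∈ star sp im U := (star sp im U).smul_mem _ hqU
      obtain ⟨a, b, hab, hane⟩ := hUn (CF sp im p dp) (hpU dp) (CF sp im q₁ dp) (hq₁U dp)
        (good_topne sp im hp) (good_topne sp im hq₁good)
      set ra := (⇑σ.symm)^[dp] (unop a) with hra
      have hσra : (⇑σ)^[dp] ra = unop a := sigma_iter_symm σ dp _
      set rb := (⇑σ.symm)^[dp] (unop b) with hrb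
      have hσrb : (⇑σ)^[dp] rb = unop b := sigma_iter_symm σ dp _
      set p' := op (sp.ι ra) • p with hp'def
      set q₂ := op (sp.ι rb) • q₁ with hq₂def
      have hp'top : CF sp im p' dp = a • CF sp im p dp := by
        rw [hp'def, good_top_formula sp im hp, hσra, op_unop]
      have hq₂top : CF sp im q₂ dp = b • CF sp im q₁ dp := by
        rw [hq₂def, good_top_formula sp im hq₁good, hσrb, op_unop]
      have hp'ne : p' ≠ 0 := by
        intro h0
        apply hane
        rw [← hp'top, h0, map_zero]
        rfl
      have hq₂ne : q₂ ≠ 0 := by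
        intro h0
        apply hane
        rw [hab, ← hq₂top, h0, map_zero]
        rfl
      have hp'good := goodAt_smul_iota sp im hp ra hp'ne
      have hq₂good := goodAt_smul_iota sp im hq₁good rb hq₂ne
      have htops : CF sp im p' dp = CF sp im q₂ dp := by
        rw [hp'top, hq₂top, hab]
      have hp'span : p' ∈ Submodule.span Sᵐᵒᵖ {p} :=
        Submodule.smul_mem _ _ (Submodule.mem_span_singleton_self p)
      have hq₂span : q₂ ∈ Submodule.span Sᵐᵒᵖ {q} := Submodule.smul_mem _ _ hq₁span
      have hp'U : p' ∈ star sp im U := (star sp im U).smul_mem _ hpU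
      have hq₂U : q₂ ∈ star sp im U := (star sp im U).smul_mem _ hq₁U
      set ν := p' - q₂ with hνdef
      by_cases hν0 : ν = 0
      · have hpq : p' = q₂ := by rwa [sub_eq_zero] at hν0
        exact ⟨p', hp'ne, hp'span, hpq ▸ hq₂span⟩
      · have hνb : ∀ i, dp ≤ i → CF sp im ν i = 0 := by
          intro i hi
          rw [hνdef, map_sub, Finsupp.sub_apply]
          rcases lt_or_eq_of_le hi with hlt | rfl
          · rw [good_bound sp im hp'good i hlt, good_bound sp im hq₂good i hlt, sub_zero]
          · rw [htops]; exact sub_self _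
        obtain ⟨Dν, hDν⟩ := exists_degEq sp im ν hν0
        have hDνlt : Dν < dp := by
          by_contra hge
          push_neg at hge
          exact ((degEq_iff sp im ν Dν).mp hDν).1 (hνb Dν hge)
        obtain ⟨g', d', hg'span, hg'good, hd'le⟩ := exists_min_good sp im ν hν0 hDν
        have hd' : d' < dp := lt_of_le_of_lt hd'le hDνlt
        have hνU : ν ∈ star sp im U := (star sp im U).sub_mem hp'U hq₂U
        have hg'U : g' ∈ star sp im U := by
          have hle2 : Submodule.span Sᵐᵒᵖ {ν} ≤ star sp im U := by
            rw [Submodule.span_le, Set.singleton_subset_iff]; exact hνU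
          exact hle2 hg'span
        obtain ⟨ξ', hξ'ne, hξ'g', hξ'q⟩ := IH (d' + dq) (by omega) d' dq g' q rfl
          hg'good hq hg'U hqU
        have hξν : ξ' ∈ Submodule.span Sᵐᵒᵖ {ν} := by
          have hle2 : Submodule.span Sᵐᵒᵖ {g'} ≤ Submodule.span Sᵐᵒᵖ {ν} := by
            rw [Submodule.span_le, Set.singleton_subset_iff]; exact hg'span
          exact hle2 hξ'g'
        obtain ⟨aξ, haξ⟩ := Submodule.mem_span_singleton.mp hξν
        set cand := aξ • p' with hcand
        have hcandp : cand ∈ Submodule.span Sᵐᵒᵖ {p} := Submodule.smul_mem _ _ hp'span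
        have hcandq : cand ∈ Submodule.span Sᵐᵒᵖ {q} := by
          have h1 : cand = ξ' + aξ • q₂ := by
            rw [hcand, ← haξ, hνdef, smul_sub]
            abel
          rw [h1]
          exact Submodule.add_mem _ hξ'q (Submodule.smul_mem _ _ hq₂span)
        by_cases hcne : cand = 0
        · exfalso
          obtain ⟨fc, hfc⟩ := exists_fc sp (unop aξ)
          have haop : aξ = op (fc.sum fun i a => sp.ι a * sp.x ^ i) := by rw [← hfc, op_unop]
          have hz1 : ∀ t, op (sp.ι (fc t)) • p' = 0 := by
            rw [hcand, haop] at hcne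
            exact (good_smul_decomp_eq_zero_iff sp im hp'good fc).mp hcne
          have hz2 : ∀ t, op (sp.ι (fc t)) • q₂ = 0 := by
            intro t
            apply good_smul_iota_eq_zero sp im hq₂good
            have htf := good_top_formula sp im hp'good (fc t)
            rw [hz1 t, map_zero] at htf
            rw [← htops]
            simpa using htf.symm
          apply hξ'ne
          rw [← haξ, hνdef, smul_sub]
          have hqz : aξ • q₂ = 0 := by
            rw [haop]
            exact (good_smul_decomp_eq_zero_iff sp im hq₂good fc).mpr hz2
          rw [← hcand, hcne, hqz, sub_zero]
        · exact ⟨cand, hcne, hcandp, hcandq⟩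
  intro dp dq p q hsum hp hq hpU hqU
  rcases le_total dq dp with hle | hle
  · exact main dp dq p q hsum hle hp hq hpU hqU
  · obtain ⟨ξ, h1, h2, h3⟩ := main dq dp q p (by omega) hle hq hp hqU hpU
    exact ⟨ξ, h1, h3, h2⟩

end MainUnif

end Stmt11
namespace Stmt11

open Finsupp

variable {R S M N : Type} [Ring R] [Ring S] [AddCommGroup M] [Module Rᵐᵒᵖ M]
  [AddCommGroup N] [Module Sᵐᵒᵖ N] {σ : R ≃+* R} {δ : R → R}

section Assemble

variable (sp : SkewPoly R S σ δ) (im : Induced R S M N sp)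

lemma star_disjoint {ι : Type} (U : ι → Submodule Rᵐᵒᵖ M) (i : ι) (s : Set ι)
    (h : Disjoint (U i) (⨆ j ∈ s, U j)) :
    Disjoint (star sp im (U i)) (⨆ j ∈ s, star sp im (U j)) := by
  rw [_root_.disjoint_iff] at h ⊢
  have h1 : (⨆ j ∈ s, star sp im (U j)) ≤ star sp im (⨆ j ∈ s, U j) := by
    refine iSup₂_le fun j hj => ?_
    exact star_mono sp im (le_iSup₂ (f := fun j (_ : j ∈ s) => U j) j hj)
  apply le_bot_iff.mp
  calc star sp im (U i) ⊓ (⨆ j ∈ s, star sp im (U j))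
      ≤ star sp im (U i) ⊓ star sp im (⨆ j ∈ s, U j) := inf_le_inf_left _ h1
    _ = star sp im ((U i) ⊓ ⨆ j ∈ s, U j) := (star_inf sp im _ _).symm
    _ = star sp im ⊥ := by rw [h]
    _ = ⊥ := star_bot sp im

lemma span_le_of_mem {T V : Type} [Ring T] [AddCommGroup V] [Module T V]
    {x : V} {W : Submodule T V} (hx : x ∈ W) : Submodule.span T {x} ≤ W := by
  rw [Submodule.span_le, Set.singleton_subset_iff]; exact hx

end Assemble

end Stmt11
open Stmt11 in
/-- if the induced module `M ⊗_R S` is good, then it has the same uniform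
dimension (finite or infinite) as `M_R`. -/
theorem stmt11 (sp : SkewPoly R S σ δ) (im : Induced R S M N sp) (hδ : IsSigmaDeriv σ δ)
    (hgood : ∀ (ν : N) (k : ℕ), GoodAt sp im ν k →
      ∀ n, k ≤ n → ∃ f : S, GoodAt sp im (op f • ν) n) :
    (∀ n : ℕ, HasUdim Rᵐᵒᵖ M n → HasUdim Sᵐᵒᵖ N n) ∧
      (InfUdim Rᵐᵒᵖ M → InfUdim Sᵐᵒᵖ N) := by
  constructor
  · rintro n ⟨U, hUnif, hDisj, hEssM⟩
    refine ⟨fun i => star sp im (U i), ?_, ?_, ?_⟩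
    · -- uniformity
      intro i
      constructor
      · exact star_ne_bot sp im (hUnif i).1
      · intro A B hA hB hA0 hB0
        obtain ⟨a, haA, ha0⟩ := (Submodule.ne_bot_iff A).mp hA0
        obtain ⟨b, hbB, hb0⟩ := (Submodule.ne_bot_iff B).mp hB0
        obtain ⟨da, hda⟩ := exists_degEq sp im a ha0
        obtain ⟨db, hdb⟩ := exists_degEq sp im b hb0
        obtain ⟨p, dp, hpspan, hpgood, -⟩ := exists_min_good sp im a ha0 hda
        obtain ⟨q, dq, hqspan, hqgood, -⟩ := exists_min_good sp im b hb0 hdb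
        have hspanA : Submodule.span Sᵐᵒᵖ {a} ≤ A := span_le_of_mem haA
        have hspanB : Submodule.span Sᵐᵒᵖ {b} ≤ B := span_le_of_mem hbB
        have hpA : p ∈ A := hspanA hpspan
        have hqB : q ∈ B := hspanB hqspan
        have hpU : p ∈ star sp im (U i) := hA hpA
        have hqU : q ∈ star sp im (U i) := hB hqB
        have hUn : ∀ m ∈ U i, ∀ m' ∈ U i, m ≠ 0 → m' ≠ 0 →
            ∃ u v : Rᵐᵒᵖ, u • m = v • m' ∧ u • m ≠ 0 := by
          intro m hm m' hm' h0 h0'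
          have h := (hUnif i).2 (Submodule.span Rᵐᵒᵖ {m}) (Submodule.span Rᵐᵒᵖ {m'})
            (span_le_of_mem hm) (span_le_of_mem hm')
            (by rw [Ne, Submodule.span_singleton_eq_bot]; exact h0)
            (by rw [Ne, Submodule.span_singleton_eq_bot]; exact h0')
          obtain ⟨x, hx, hxne⟩ := (Submodule.ne_bot_iff _).mp h
          rw [Submodule.mem_inf] at hx
          obtain ⟨u, hu⟩ := Submodule.mem_span_singleton.mp hx.1
          obtain ⟨v, hv⟩ := Submodule.mem_span_singleton.mp hx.2
          exact ⟨u, v, by rw [hu, hv], by rw [hu]; exact hxne⟩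
        obtain ⟨ξ, hξne, hξp, hξq⟩ := unif_core sp im hgood (U i) hUn (dp + dq) dp dq p q rfl
          hpgood hqgood hpU hqU
        rw [Submodule.ne_bot_iff]
        refine ⟨ξ, Submodule.mem_inf.mpr ⟨?_, ?_⟩, hξne⟩
        · exact hspanA ((span_le_of_mem hpspan) hξp)
        · exact hspanB ((span_le_of_mem hqspan) hξq)
    · -- independence
      intro i
      exact star_disjoint sp im U i ({i}ᶜ : Set (Fin n)) (hDisj i)
    · -- essentiality
      have hsup : (⨆ i, star sp im (U i)) = star sp im (⨆ i, U i) := (star_iSup sp im U).symm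
      rw [hsup]
      intro W hW
      obtain ⟨w, hwW, hw0⟩ := (Submodule.ne_bot_iff W).mp hW
      obtain ⟨e, he⟩ := exists_degEq sp im w hw0
      obtain ⟨g, d, hgspan, hggood, -⟩ := exists_min_good sp im w hw0 he
      have hEss : ∀ m ∈ (⊤ : Submodule Rᵐᵒᵖ M), m ≠ 0 →
          ∃ v : Rᵐᵒᵖ, v • m ∈ (⨆ i, U i) ∧ v • m ≠ 0 := by
        intro m _ h0
        have h := hEssM (Submodule.span Rᵐᵒᵖ {m})
          (by rw [Ne, Submodule.span_singleton_eq_bot]; exact h0)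
        obtain ⟨x, hx, hxne⟩ := (Submodule.ne_bot_iff _).mp h
        rw [Submodule.mem_inf] at hx
        obtain ⟨v, hv⟩ := Submodule.mem_span_singleton.mp hx.2
        exact ⟨v, by rw [hv]; exact hx.1, by rw [hv]; exact hxne⟩
      have hgtop : g ∈ star sp im (⊤ : Submodule Rᵐᵒᵖ M) := fun _ => trivial
      obtain ⟨ξ, hξne, hξg, hξE⟩ := ess_core sp im hgood ⊤ (⨆ i, U i) le_top hEss d g
        hggood hgtop
      rw [Submodule.ne_bot_iff]
      refine ⟨ξ, Submodule.mem_inf.mpr ⟨hξE, ?_⟩, hξne⟩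
      exact (span_le_of_mem hwW) ((span_le_of_mem hgspan) hξg)
  · rintro ⟨U, hne, hdisj⟩
    refine ⟨fun i => star sp im (U i), fun i => star_ne_bot sp im (hne i), ?_⟩
    intro i
    exact star_disjoint sp im U i ({i}ᶜ : Set ℕ) (hdisj i)
end

section
/- Let R be a ring, σ an automorphism of R, δ a σ-derivation, S = R[x; σ, δ], and M a right R-module. If δ = 0 (endomorphism type), then for every good polynomial m ∈ M ⊗_R S and every n ∈ ℕ, the polynomial m x^n is again good; consequently M ⊗_R S is a good module. -/
open MulOpposite

variable {R S M N : Type} [Ring R] [Ring S] [AddCommGroup M] [Module Rᵐᵒᵖ M]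
  [AddCommGroup N] [Module Sᵐᵒᵖ N] {σ : R ≃+* R} {δ : R → R}

/-- The embedding `i ↦ i + n` of `ℕ` into itself. -/
def shiftEmb (n : ℕ) : ℕ ↪ ℕ := ⟨fun i => i + n, add_left_injective n⟩

lemma xpow_comm (sp : SkewPoly R S σ δ) (hδ0 : ∀ r : R, δ r = 0) (n : ℕ) (r : R) :
    sp.x ^ n * sp.ι r = sp.ι ((⇑σ)^[n] r) * sp.x ^ n := by
  induction n generalizing r with
  | zero => simp
  | succ n ih =>
    have h1 : sp.x * sp.ι r = sp.ι (σ r) * sp.x := by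
      rw [sp.comm r, hδ0, map_zero, add_zero]
    rw [pow_succ, mul_assoc, h1, ← mul_assoc, ih (σ r), Function.iterate_succ_apply,
      mul_assoc]

lemma pol_shift (sp : SkewPoly R S σ δ) (im : Induced R S M N sp) (c : ℕ →₀ M) (n : ℕ) :
    pol sp im (Finsupp.embDomain (shiftEmb n) c) = op (sp.x ^ n) • pol sp im c := by
  unfold pol
  rw [Finsupp.sum_embDomain, Finsupp.smul_sum]
  refine Finsupp.sum_congr fun i _ => ?_
  show op (sp.x ^ (i + n)) • im.j (c i) = _
  rw [smul_smul, ← MulOpposite.op_mul, ← pow_add]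

lemma smul_xpow_ne_zero (sp : SkewPoly R S σ δ) (im : Induced R S M N sp) (ν : N)
    (hν : ν ≠ 0) (n : ℕ) : op (sp.x ^ n) • ν ≠ 0 := by
  obtain ⟨c, hc⟩ := im.free.2 ν
  have hc' : pol sp im c = ν := hc
  rw [← hc', ← pol_shift]
  intro h0
  have h0' : pol sp im (Finsupp.embDomain (shiftEmb n) c) = pol sp im 0 := by
    rw [h0]; simp [pol]
  have := im.free.1 h0'
  rw [Finsupp.embDomain_eq_zero] at this
  exact hν (by rw [← hc', this]; simp [pol])

lemma degEq_shift (sp : SkewPoly R S σ δ) (im : Induced R S M N sp) (ν : N) (k n : ℕ)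
    (h : DegEq sp im ν k) : DegEq sp im (op (sp.x ^ n) • ν) (k + n) := by
  obtain ⟨c, hc, hk, htop⟩ := h
  refine ⟨Finsupp.embDomain (shiftEmb n) c, by rw [pol_shift, hc], ?_, ?_⟩
  · have : Finsupp.embDomain (shiftEmb n) c (shiftEmb n k) = c k :=
      Finsupp.embDomain_apply_self _ _ _
    simpa [shiftEmb] using this ▸ hk
  · intro i hi
    have hn : n ≤ i := by omega
    have hi' : i = shiftEmb n (i - n) := by simp [shiftEmb]; omega
    rw [hi', Finsupp.embDomain_apply_self]
    exact htop _ (by omega)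

lemma goodAt_shift (sp : SkewPoly R S σ δ) (im : Induced R S M N sp)
    (hδ0 : ∀ r : R, δ r = 0) (ν : N) (k n : ℕ) (h : GoodAt sp im ν k) :
    GoodAt sp im (op (sp.x ^ n) • ν) (k + n) := by
  obtain ⟨hdeg, hgood⟩ := h
  refine ⟨degEq_shift _ _ _ _ _ hdeg, fun r hr => ?_⟩
  have key : op (sp.ι r) • op (sp.x ^ n) • ν
      = op (sp.x ^ n) • (op (sp.ι ((⇑σ)^[n] r)) • ν) := by
    rw [smul_smul, smul_smul, ← MulOpposite.op_mul, ← MulOpposite.op_mul,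
      xpow_comm sp hδ0]
  rw [key] at hr ⊢
  have hν' : op (sp.ι ((⇑σ)^[n] r)) • ν ≠ 0 := by
    intro h0; rw [h0, smul_zero] at hr; exact hr rfl
  exact degEq_shift _ _ _ _ _ (hgood _ hν')

/-- if `δ = 0` (endomorphism type), then for every good polynomial `m` and every
`n ∈ ℕ`, the polynomial `m·xⁿ` is again good; consequently `M ⊗_R S` is a good module. -/
theorem stmt13 (sp : SkewPoly R S σ δ) (im : Induced R S M N sp) (hδ : IsSigmaDeriv σ δ)
    (hδ0 : ∀ r : R, δ r = 0) :
    (∀ (ν : N) (k : ℕ), GoodAt sp im ν k → ∀ n : ℕ, Good sp im (op (sp.x ^ n) • ν)) ∧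
      (∀ (ν : N) (k : ℕ), GoodAt sp im ν k →
        ∀ n, k ≤ n → ∃ f : S, GoodAt sp im (op f • ν) n) := by
  constructor
  · intro ν k h n
    exact ⟨k + n, goodAt_shift sp im hδ0 ν k n h⟩
  · intro ν k h n hn
    refine ⟨sp.x ^ (n - k), ?_⟩
    have := goodAt_shift sp im hδ0 ν k (n - k) h
    rwa [show k + (n - k) = n from by omega] at this
end
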